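/- arXiv:2301.05703 — 6 statements merged into one kernel-verified Lean document; each statement's English description precedes it below -/
import Mathlib

section
/- Let r:𝒳→(0,1) be measurable with r(X)(1−r(X))/(e(X)(1−e(X))) ≤ M a.s. for some M > 0, and define the stabilized AIPW residual Ψ[τ̃, ẽ, (μ̃0,μ̃1)] = r(X)(1−r(X))·[τ̃(X) − (μ̃1(X)−μ̃0(X)) − (W−ẽ(X))·(Y − W·μ̃1(X) − (1−W)·μ̃0(X))/(ẽ(X)(1−ẽ(X)))] for bounded measurable candidates τ̃, μ̃0, μ̃1 and measurable ẽ with ẽ(X) bounded away from 0 and 1. Then, almost surely: (i) global double robustness holds: E[Ψ[τ̃, e, (μ̃0,μ̃1)] | σ(X)] = E[Ψ[τ̃, ẽ, (μ0,μ1)] | σ(X)] = r(X)(1−r(X))·(τ̃(X)−τ(X)), and these vanish a.s. iff τ̃(X) = τ(X) a.s.; and (ii) Neyman orthogonality holds: for bounded measurable directions (h_e, h_{μ0}, h_{μ1}) on 𝒳 such that e + t·h_e stays bounded inside (0,1) for t near 0, for almost every ω the function t ↦ E[Ψ[τ, e+t·h_e, (μ0+t·h_{μ0}, μ1+t·h_{μ1})]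 | σ(X)](ω) has derivative 0 at t = 0. -/
/-!
Conditional independence of `W` and `(Y0, Y1)` given `σ(X)` means that conditioning on
`(Y0, Y1)` as well does not change `E[W | ·]`, so the tower property gives `E[W Y1 | X] = e μ1` and
`E[(1 - W) Y0 | X] = (1 - e) μ0`. Since `W` is binary, the residual splits as
`q (τ̃ - (μ̃1 - μ̃0)) - (q / ẽ) W (Y1 - μ̃1) + (q / (1 - ẽ)) (1 - W) (Y0 - μ̃0)`, whose conditional
mean is `q (τ̃ - (μ̃1 - μ̃0)) - (q / ẽ) e (μ1 - μ̃1) + (q / (1 - ẽ)) (1 - e) (μ0 - μ̃0)`.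
This reduces to `q (τ̃ - τ)` as soon as `ẽ = e` or `μ̃ = μ`, and along a perturbation
`(e + t hₑ, μ0 + t h₀, μ1 + t h₁)` of the truth it is `t φ(t)` with `φ` continuous and `φ 0 = 0`.
-/

open MeasureTheory ProbabilityTheory Filter Set

/-- The sub-σ-algebra σ(X) generated by a random element `X`. -/
abbrev sigmaAlg {Ω 𝒳 : Type*} [m𝒳 : MeasurableSpace 𝒳] (X : Ω → 𝒳) : MeasurableSpace Ω :=
  MeasurableSpace.comap X m𝒳

section

variable {Ω β γ : Type*} {m m₂ mΩ : MeasurableSpace Ω}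

namespace MeasurableSpace

theorem sup_eq_generateFrom_image2_inter (m₁ m₂ : MeasurableSpace Ω) :
    m₁ ⊔ m₂ =
      generateFrom (image2 (· ∩ ·) {s | MeasurableSet[m₁] s} {t | MeasurableSet[m₂] t}) := by
  refine le_antisymm (sup_le (fun s hs => ?_) (fun t ht => ?_)) (generateFrom_le ?_)
  · exact measurableSet_generateFrom ⟨s, hs, univ, MeasurableSet.univ, inter_univ s⟩
  · exact measurableSet_generateFrom ⟨univ, MeasurableSet.univ, t, ht, univ_inter t⟩
  · rintro _ ⟨s, hs, t, ht, rfl⟩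
    exact (le_sup_left (b := m₂) s hs).inter (le_sup_right (a := m₁) t ht)

theorem isPiSystem_image2_inter (m₁ m₂ : MeasurableSpace Ω) :
    IsPiSystem (image2 (· ∩ ·) {s | MeasurableSet[m₁] s} {t | MeasurableSet[m₂] t}) := by
  rintro _ ⟨s₁, hs₁, t₁, ht₁, rfl⟩ _ ⟨s₂, hs₂, t₂, ht₂, rfl⟩ -
  exact ⟨s₁ ∩ s₂, hs₁.inter hs₂, t₁ ∩ t₂, ht₁.inter ht₂, inter_inter_inter_comm s₁ s₂ t₁ t₂⟩

end MeasurableSpace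

theorem condExp_indicator_sup_comap_ae_eq [StandardBorelSpace Ω] [MeasurableSpace β]
    [mγ : MeasurableSpace γ] (hm : m ≤ mΩ) {P : Measure Ω}
    [IsFiniteMeasure P] {W : Ω → β} {V : Ω → γ} (hW : Measurable W) (hV : Measurable V)
    (hWV : CondIndepFun m hm W V P) {s : Set β} (hs : MeasurableSet s) :
    P[(W ⁻¹' s).indicator 1|m ⊔ mγ.comap V] =ᵐ[P] P[(W ⁻¹' s).indicator (1 : Ω → ℝ)|m] := by
  have hm₂ : m ⊔ mγ.comap V ≤ mΩ := sup_le hm hV.comap_le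
  have hA : Integrable ((W ⁻¹' s).indicator (1 : Ω → ℝ)) P :=
    (integrable_const 1).indicator (hW hs)
  have hE : StronglyMeasurable[m ⊔ mγ.comap V] P[(W ⁻¹' s).indicator (1 : Ω → ℝ)|m] :=
    stronglyMeasurable_condExp.mono le_sup_left
  suffices h : ∀ B, MeasurableSet[m ⊔ mγ.comap V] B →
      ∫ ω in B, P[(W ⁻¹' s).indicator 1|m] ω ∂P = ∫ ω in B, (W ⁻¹' s).indicator 1 ω ∂P from
    (ae_eq_condExp_of_forall_setIntegral_eq hm₂ hA (fun _ _ _ => integrable_condExp.integrableOn)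
      (fun B hB _ => h B hB) hE.aestronglyMeasurable).symm
  intro B hB
  induction B, hB using MeasurableSpace.induction_on_inter
    (MeasurableSpace.sup_eq_generateFrom_image2_inter m _)
    (MeasurableSpace.isPiSystem_image2_inter m _) with
  | empty => simp
  | basic _ hB =>
    obtain ⟨S, hS, _, ⟨t, ht, rfl⟩, rfl⟩ := hB
    have hT := hV ht
    calc ∫ ω in S ∩ V ⁻¹' t, P[(W ⁻¹' s).indicator 1|m] ω ∂P
        = ∫ ω in S, P[(V ⁻¹' t).indicator P[(W ⁻¹' s).indicator 1|m]|m] ω ∂P := by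
          rw [setIntegral_condExp hm (integrable_condExp.indicator hT) hS,
            setIntegral_indicator hT]
      _ = ∫ ω in S, P[(W ⁻¹' s ∩ V ⁻¹' t).indicator 1|m] ω ∂P := by
          refine integral_congr_ae (ae_restrict_of_ae ?_)
          have hprod := (condIndepFun_iff_condExp_inter_preimage_eq_mul hW hV).mp hWV s t hs ht
          have hind : (V ⁻¹' t).indicator P[(W ⁻¹' s).indicator 1|m]
              = P[(W ⁻¹' s).indicator 1|m] * (V ⁻¹' t).indicator (1 : Ω → ℝ) := by
            ext ω; by_cases hω : ω ∈ V ⁻¹' t <;> simp [hω]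
          rw [hind]
          refine (condExp_mul_of_stronglyMeasurable_left stronglyMeasurable_condExp ?_
            ((integrable_const 1).indicator hT)).trans hprod.symm
          exact hind ▸ integrable_condExp.indicator hT
      _ = ∫ ω in S ∩ V ⁻¹' t, (W ⁻¹' s).indicator 1 ω ∂P := by
          rw [setIntegral_condExp hm ((integrable_const 1).indicator ((hW hs).inter hT)) hS,
            inter_comm, ← indicator_indicator, setIntegral_indicator hT]
  | compl B hB ih =>
    have hE := integral_add_compl (hm₂ _ hB) (integrable_condExp (m := m) (μ := P)
      (f := (W ⁻¹' s).indicator (1 : Ω → ℝ)))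
    rw [integral_condExp hm] at hE
    linarith [integral_add_compl (hm₂ _ hB) hA]
  | iUnion f hd hf ih =>
    rw [integral_iUnion (fun i => hm₂ _ (hf i)) hd integrable_condExp.integrableOn,
      integral_iUnion (fun i => hm₂ _ (hf i)) hd hA.integrableOn]
    exact tsum_congr ih

theorem condExp_mul_ae_eq_of_condExp_sup (hm : m ≤ m₂) (hm₂ : m₂ ≤ mΩ) {P : Measure Ω}
    [IsFiniteMeasure P] {f g : Ω → ℝ} (hf : Integrable f P) (hg : StronglyMeasurable[m₂] g)
    (hgi : Integrable g P) (hfg : Integrable (f * g) P) (hf₂ : P[f|m₂] =ᵐ[P] P[f|m]) :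
    P[f * g|m] =ᵐ[P] P[f|m] * P[g|m] := by
  have h₂ : P[f * g|m₂] =ᵐ[P] P[f|m] * g :=
    (condExp_mul_of_stronglyMeasurable_right hg hfg hf).trans (hf₂.mul EventuallyEq.rfl)
  calc P[f * g|m] =ᵐ[P] P[P[f * g|m₂]|m] := (condExp_condExp_of_le hm hm₂).symm
    _ =ᵐ[P] P[P[f|m] * g|m] := condExp_congr_ae h₂
    _ =ᵐ[P] P[f|m] * P[g|m] :=
      condExp_mul_of_stronglyMeasurable_left stronglyMeasurable_condExp
        (integrable_condExp.congr h₂) hgi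

theorem condExp_one_sub_ae_eq (hm : m ≤ mΩ) {P : Measure Ω} [IsFiniteMeasure P] {W e : Ω → ℝ}
    (hW : Integrable W P) (he : P[W|m] =ᵐ[P] e) :
    P[fun ω => 1 - W ω|m] =ᵐ[P] fun ω => 1 - e ω := by
  filter_upwards [condExp_sub (integrable_const 1) hW m, he] with ω h hω
  change P[(fun _ => (1 : ℝ)) - W|m] ω = _
  rw [h, Pi.sub_apply, condExp_const hm, hω]

/-- `e` is the propensity score and `μ0, μ1` the outcome regressions given `m`; unconfoundedness
enters only through its consequences `condExp_treated` and `condExp_control`. -/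
structure PotentialOutcomeModel (m : MeasurableSpace Ω) {mΩ : MeasurableSpace Ω}
    (P : Measure Ω) (W Y0 Y1 Y e μ0 μ1 : Ω → ℝ) : Prop where
  le : m ≤ mΩ
  measurable_treatment : Measurable W
  treatment_binary : ∀ ω, W ω = 0 ∨ W ω = 1
  observed_eq : ∀ ω, Y ω = W ω * Y1 ω + (1 - W ω) * Y0 ω
  integrable_Y0 : Integrable Y0 P
  integrable_Y1 : Integrable Y1 P
  condExp_treatment : P[W|m] =ᵐ[P] e
  condExp_treated : P[fun ω => W ω * Y1 ω|m] =ᵐ[P] fun ω => e ω * μ1 ω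
  condExp_control : P[fun ω => (1 - W ω) * Y0 ω|m] =ᵐ[P] fun ω => (1 - e ω) * μ0 ω

theorem PotentialOutcomeModel.of_condIndepFun [StandardBorelSpace Ω] (hm : m ≤ mΩ)
    {P : Measure Ω} [IsFiniteMeasure P] {W Y0 Y1 Y e μ0 μ1 : Ω → ℝ}
    (hW : Measurable W) (hWbin : ∀ ω, W ω = 0 ∨ W ω = 1) (hY0 : Measurable Y0)
    (hY1 : Measurable Y1) (hY0i : Integrable Y0 P) (hY1i : Integrable Y1 P)
    (hY : ∀ ω, Y ω = W ω * Y1 ω + (1 - W ω) * Y0 ω)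
    (hind : CondIndepFun m hm W (fun ω => (Y0 ω, Y1 ω)) P) (he : P[W|m] =ᵐ[P] e)
    (hμ0 : P[Y0|m] =ᵐ[P] μ0) (hμ1 : P[Y1|m] =ᵐ[P] μ1) :
    PotentialOutcomeModel m P W Y0 Y1 Y e μ0 μ1 := by
  set V := fun ω => (Y0 ω, Y1 ω)
  have hV : Measurable V := hY0.prodMk hY1
  have hm₂ : m ⊔ MeasurableSpace.comap V inferInstance ≤ mΩ := sup_le hm hV.comap_le
  have hWb : ∀ᵐ ω ∂P, ‖W ω‖ ≤ 1 :=
    ae_of_all _ fun ω => by rcases hWbin ω with h | h <;> simp [h]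
  have hWi : Integrable W P := .of_bound hW.aestronglyMeasurable 1 hWb
  have hW₁ : P[W|m ⊔ MeasurableSpace.comap V inferInstance] =ᵐ[P] P[W|m] := by
    have hW_eq : (W ⁻¹' {1}).indicator 1 = W := by
      ext ω; rcases hWbin ω with h | h <;> simp [h]
    simpa only [hW_eq] using
      condExp_indicator_sup_comap_ae_eq hm hW hV hind (measurableSet_singleton 1)
  have hW₀ : P[fun ω => 1 - W ω|m ⊔ MeasurableSpace.comap V inferInstance]
      =ᵐ[P] P[fun ω => 1 - W ω|m] := by
    have hW_eq : (W ⁻¹' {0}).indicator 1 = fun ω => 1 - W ω := by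
      ext ω; rcases hWbin ω with h | h <;> simp [h]
    simpa only [hW_eq] using
      condExp_indicator_sup_comap_ae_eq hm hW hV hind (measurableSet_singleton 0)
  have hYm : ∀ {Z : Ω → ℝ}, Measurable[MeasurableSpace.comap V inferInstance] Z →
      StronglyMeasurable[m ⊔ MeasurableSpace.comap V inferInstance] Z := fun hZ =>
    (hZ.mono (le_sup_right (a := m)) le_rfl).stronglyMeasurable
  refine ⟨hm, hW, hWbin, hY, hY0i, hY1i, he, ?_, ?_⟩
  · exact (condExp_mul_ae_eq_of_condExp_sup le_sup_left hm₂ hWi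
      (hYm (measurable_snd.comp (comap_measurable V))) hY1i
      (hY1i.bdd_mul hW.aestronglyMeasurable hWb) hW₁).trans (he.mul hμ1)
  · have h1W : ∀ᵐ ω ∂P, ‖1 - W ω‖ ≤ 1 :=
      ae_of_all _ fun ω => by rcases hWbin ω with h | h <;> simp [h]
    exact (condExp_mul_ae_eq_of_condExp_sup le_sup_left hm₂ ((integrable_const 1).sub hWi)
      (hYm (measurable_fst.comp (comap_measurable V))) hY0i
      (hY0i.bdd_mul (measurable_const.sub hW).aestronglyMeasurable h1W) hW₀).trans
      ((condExp_one_sub_ae_eq hm hWi he).mul hμ0)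

theorem condExp_mul_mul_sub_ae_eq (hm : m ≤ mΩ) {P : Measure Ω} [IsFiniteMeasure P]
    {a V Z g p ζ : Ω → ℝ} (ha : Measurable[m] a) {C : ℝ} (haC : ∀ᵐ ω ∂P, |a ω| ≤ C)
    (hV : Measurable V) (hVb : ∀ ω, |V ω| ≤ 1) (hZ : Integrable Z P) (hg : Measurable[m] g)
    (hgi : Integrable g P) (hVp : P[V|m] =ᵐ[P] p)
    (hVZ : P[fun ω => V ω * Z ω|m] =ᵐ[P] fun ω => p ω * ζ ω) :
    P[fun ω => a ω * (V ω * (Z ω - g ω))|m] =ᵐ[P] fun ω => a ω * (p ω * (ζ ω - g ω)) := by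
  have hVb' : ∀ᵐ ω ∂P, ‖V ω‖ ≤ 1 := ae_of_all _ hVb
  have hVi : Integrable V P := .of_bound hV.aestronglyMeasurable 1 hVb'
  have hgV : Integrable (g * V) P := hgi.mul_bdd hV.aestronglyMeasurable hVb'
  have hVZg : Integrable (fun ω => V ω * (Z ω - g ω)) P :=
    (hZ.sub hgi).bdd_mul hV.aestronglyMeasurable hVb'
  have hsplit : (fun ω => V ω * (Z ω - g ω)) = (fun ω => V ω * Z ω) - g * V := by
    ext ω; simp only [Pi.sub_apply, Pi.mul_apply]; ring
  have hinner : P[fun ω => V ω * (Z ω - g ω)|m] =ᵐ[P] fun ω => p ω * (ζ ω - g ω) := by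
    rw [hsplit]
    filter_upwards [condExp_sub (hZ.bdd_mul hV.aestronglyMeasurable hVb') hgV m, hVZ, hVp,
      condExp_mul_of_stronglyMeasurable_left hg.stronglyMeasurable hgV hVi] with ω h h₁ h₂ h₃
    simp only [h, Pi.sub_apply, h₁, h₃, Pi.mul_apply, h₂]
    ring
  filter_upwards [condExp_stronglyMeasurable_mul_of_bound₀ hm
    ha.stronglyMeasurable.aestronglyMeasurable hVZg C haC, hinner] with ω h₁ h₂
  rw [← h₂]
  exact h₁

theorem abs_div_le_div_of_le_of_le {q x c C : ℝ} (hq : |q| ≤ C) (hc : 0 < c)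
    (hx : c ≤ x ∧ x ≤ 1 - c) : |q / x| ≤ C / c ∧ |q / (1 - x)| ≤ C / c := by
  have hC : 0 ≤ C := (abs_nonneg q).trans hq
  constructor
  · rw [abs_div, abs_of_pos (hc.trans_le hx.1)]
    exact div_le_div₀ hC hq hc hx.1
  · rw [abs_div, abs_of_pos (a := 1 - x) (by linarith)]
    exact div_le_div₀ hC hq hc (by linarith)

theorem abs_div_le_of_div_mul_one_sub_le {q x M : ℝ} (hq : 0 ≤ q) (hx : 0 < x ∧ x < 1)
    (hM : q / (x * (1 - x)) ≤ M) : |q / x| ≤ M ∧ |q / (1 - x)| ≤ M := by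
  obtain ⟨hx0, hx1⟩ := hx
  have h1x : 0 < 1 - x := by linarith
  have hw : 0 ≤ q / (x * (1 - x)) := by positivity
  have e₁ : q / x = q / (x * (1 - x)) * (1 - x) := by field_simp
  have e₂ : q / (1 - x) = q / (x * (1 - x)) * x := by field_simp
  rw [abs_of_nonneg (by positivity), abs_of_nonneg (by positivity), e₁, e₂]
  constructor <;> nlinarith

theorem hasDerivAt_sub_mul_of_continuousAt {φ : ℝ → ℝ} {a : ℝ} (hφ : ContinuousAt φ a) :
    HasDerivAt (fun t => (t - a) * φ t) (φ a) a := by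
  rw [hasDerivAt_iff_tendsto_slope]
  refine (hφ.tendsto.mono_left nhdsWithin_le_nhds).congr' ?_
  filter_upwards [self_mem_nhdsWithin] with t ht
  rw [slope_def_field, sub_self, zero_mul, sub_zero, mul_div_cancel_left₀ _ (sub_ne_zero.mpr ht)]

theorem hasDerivAt_aipw_perturbation {q e μ0 μ1 k k0 k1 : ℝ} (he : e ≠ 0) (he1 : 1 - e ≠ 0) :
    HasDerivAt (fun t => q * ((μ1 - μ0) - ((μ1 + t * k1) - (μ0 + t * k0)))
      - q / (e + t * k) * (e * (μ1 - (μ1 + t * k1)))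
      + q / (1 - (e + t * k)) * ((1 - e) * (μ0 - (μ0 + t * k0)))) 0 0 := by
  set φ := fun t => q * (k0 - k1) + q / (e + t * k) * (e * k1)
    - q / (1 - (e + t * k)) * ((1 - e) * k0)
  have hφ : ContinuousAt φ 0 := by fun_prop (disch := simpa)
  have hφ0 : φ 0 = 0 := by
    simp only [φ, zero_mul, add_zero]
    field_simp
    ring
  convert hasDerivAt_sub_mul_of_continuousAt hφ using 1
  · ext t
    simp only [φ, sub_zero]
    ring
  · exact hφ0.symm

/-- The stabilized AIPW residual `Ψ[τ, e', (m0, m1)]` with weight `q = r (1 - r)`. -/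
noncomputable def aipwResidual (W Y q τ e' m0 m1 : Ω → ℝ) (ω : Ω) : ℝ :=
  q ω * (τ ω - (m1 ω - m0 ω) -
    (W ω - e' ω) * (Y ω - W ω * m1 ω - (1 - W ω) * m0 ω) / (e' ω * (1 - e' ω)))

namespace PotentialOutcomeModel

variable {P : Measure Ω} [IsFiniteMeasure P] {W Y0 Y1 Y e μ0 μ1 : Ω → ℝ}

theorem condExp_aipwResidual (h : PotentialOutcomeModel m P W Y0 Y1 Y e μ0 μ1)
    {q τ e' m0 m1 : Ω → ℝ} (hq : Measurable[m] q) (hτ : Measurable[m] τ) (he' : Measurable[m] e')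
    (hm0 : Measurable[m] m0) (hm1 : Measurable[m] m1) (hτi : Integrable τ P)
    (hm0i : Integrable m0 P) (hm1i : Integrable m1 P) (he'01 : ∀ᵐ ω ∂P, 0 < e' ω ∧ e' ω < 1)
    {C : ℝ} (hC : ∀ᵐ ω ∂P, |q ω / e' ω| ≤ C ∧ |q ω / (1 - e' ω)| ≤ C) :
    P[aipwResidual W Y q τ e' m0 m1|m] =ᵐ[P] fun ω => q ω * (τ ω - (m1 ω - m0 ω))
      - q ω / e' ω * (e ω * (μ1 ω - m1 ω)) + q ω / (1 - e' ω) * ((1 - e ω) * (μ0 ω - m0 ω)) := by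
  have hm := h.le
  have hW := h.measurable_treatment
  have hWb : ∀ ω, |W ω| ≤ 1 := fun ω => by rcases h.treatment_binary ω with hω | hω <;> simp [hω]
  have h1Wb : ∀ ω, |1 - W ω| ≤ 1 := fun ω => by
    rcases h.treatment_binary ω with hω | hω <;> simp [hω]
  have hqC : ∀ᵐ ω ∂P, ‖q ω‖ ≤ C := by
    filter_upwards [he'01, hC] with ω ⟨h0, h1⟩ ⟨hC, _⟩
    calc ‖q ω‖ = |q ω / e' ω| * e' ω := by
          rw [abs_div, abs_of_pos h0, div_mul_cancel₀ _ h0.ne', Real.norm_eq_abs]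
      _ ≤ C * 1 := mul_le_mul hC h1.le h0.le ((abs_nonneg _).trans hC)
      _ = C := mul_one C
  have hG₁ : Integrable (fun ω => q ω * (τ ω - (m1 ω - m0 ω))) P :=
    (hτi.sub (hm1i.sub hm0i)).bdd_mul (hq.mono hm le_rfl).aestronglyMeasurable hqC
  have hG₂ : Integrable (fun ω => q ω / e' ω * (W ω * (Y1 ω - m1 ω))) P :=
    ((h.integrable_Y1.sub hm1i).bdd_mul hW.aestronglyMeasurable (ae_of_all _ hWb)).bdd_mul
      ((hq.div he').mono hm le_rfl).aestronglyMeasurable (hC.mono fun _ h => h.1)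
  have hG₀ : Integrable (fun ω => q ω / (1 - e' ω) * ((1 - W ω) * (Y0 ω - m0 ω))) P :=
    ((h.integrable_Y0.sub hm0i).bdd_mul (measurable_const.sub hW).aestronglyMeasurable
      (ae_of_all _ h1Wb)).bdd_mul
      ((hq.div (measurable_const.sub he')).mono hm le_rfl).aestronglyMeasurable
      (hC.mono fun _ h => h.2)
  have hdecomp : aipwResidual W Y q τ e' m0 m1 =ᵐ[P]
      (fun ω => q ω * (τ ω - (m1 ω - m0 ω))) - (fun ω => q ω / e' ω * (W ω * (Y1 ω - m1 ω)))
        + fun ω => q ω / (1 - e' ω) * ((1 - W ω) * (Y0 ω - m0 ω)) := by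
    filter_upwards [he'01] with ω hω
    have : e' ω ≠ 0 := hω.1.ne'
    have : 1 - e' ω ≠ 0 := by linarith [hω.2]
    rcases h.treatment_binary ω with hω | hω <;>
      simp only [aipwResidual, h.observed_eq ω, hω, Pi.add_apply, Pi.sub_apply] <;>
      field_simp <;> ring
  refine (condExp_congr_ae hdecomp).trans ?_
  filter_upwards [condExp_add (hG₁.sub hG₂) hG₀ m, condExp_sub hG₁ hG₂ m,
    condExp_mul_mul_sub_ae_eq hm (a := fun ω => q ω / e' ω) (hq.div he')
      (hC.mono fun _ h => h.1) hW hWb h.integrable_Y1 hm1 hm1i h.condExp_treatment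
      h.condExp_treated,
    condExp_mul_mul_sub_ae_eq hm (a := fun ω => q ω / (1 - e' ω))
      (V := fun ω => 1 - W ω) (hq.div (measurable_const.sub he')) (hC.mono fun _ h => h.2)
      (measurable_const.sub hW) h1Wb h.integrable_Y0 hm0 hm0i
      (condExp_one_sub_ae_eq hm (.of_bound hW.aestronglyMeasurable 1 (ae_of_all _ hWb))
        h.condExp_treatment) h.condExp_control] with ω hadd hsub h₁ h₀
  have hG₁m : Measurable[m] fun ω => q ω * (τ ω - (m1 ω - m0 ω)) :=
    hq.mul (hτ.sub (hm1.sub hm0))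
  rw [hadd, Pi.add_apply, hsub, Pi.sub_apply, h₁, h₀,
    condExp_of_stronglyMeasurable hm hG₁m.stronglyMeasurable hG₁]

theorem condExp_aipwResidual_of_propensity (h : PotentialOutcomeModel m P W Y0 Y1 Y e μ0 μ1)
    {q τ m0 m1 : Ω → ℝ} (hq : Measurable[m] q) (hq0 : ∀ᵐ ω ∂P, 0 ≤ q ω) (he : Measurable[m] e)
    (hτ : Measurable[m] τ) (hm0 : Measurable[m] m0) (hm1 : Measurable[m] m1)
    (hτi : Integrable τ P) (hm0i : Integrable m0 P) (hm1i : Integrable m1 P)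
    (he01 : ∀ᵐ ω ∂P, 0 < e ω ∧ e ω < 1) {M : ℝ} (hM : ∀ᵐ ω ∂P, q ω / (e ω * (1 - e ω)) ≤ M) :
    P[aipwResidual W Y q τ e m0 m1|m] =ᵐ[P] fun ω => q ω * (τ ω - (μ1 ω - μ0 ω)) := by
  refine (h.condExp_aipwResidual hq hτ he hm0 hm1 hτi hm0i hm1i he01 (C := M) ?_).trans ?_
  · filter_upwards [hq0, he01, hM] with ω h₀ h₁ h₂
      using abs_div_le_of_div_mul_one_sub_le h₀ h₁ h₂
  · filter_upwards [he01] with ω hω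
    have : e ω ≠ 0 := hω.1.ne'
    have : 1 - e ω ≠ 0 := by linarith [hω.2]
    field_simp
    ring

theorem condExp_aipwResidual_of_le_of_le (h : PotentialOutcomeModel m P W Y0 Y1 Y e μ0 μ1)
    {q τ e' m0 m1 : Ω → ℝ} (hq : Measurable[m] q) {C : ℝ} (hqC : ∀ᵐ ω ∂P, |q ω| ≤ C)
    (hτ : Measurable[m] τ) (he' : Measurable[m] e') (hm0 : Measurable[m] m0)
    (hm1 : Measurable[m] m1) (hτi : Integrable τ P) (hm0i : Integrable m0 P)
    (hm1i : Integrable m1 P) {c : ℝ} (hc : 0 < c) (he'c : ∀ᵐ ω ∂P, c ≤ e' ω ∧ e' ω ≤ 1 - c) :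
    P[aipwResidual W Y q τ e' m0 m1|m] =ᵐ[P] fun ω => q ω * (τ ω - (m1 ω - m0 ω))
      - q ω / e' ω * (e ω * (μ1 ω - m1 ω)) + q ω / (1 - e' ω) * ((1 - e ω) * (μ0 ω - m0 ω)) :=
  h.condExp_aipwResidual hq hτ he' hm0 hm1 hτi hm0i hm1i
    (by filter_upwards [he'c] with ω hω using ⟨by linarith [hω.1], by linarith [hω.2]⟩)
    (by filter_upwards [hqC, he'c] with ω h₁ h₂ using abs_div_le_div_of_le_of_le h₁ hc h₂)

theorem condExp_aipwResidual_of_outcome (h : PotentialOutcomeModel m P W Y0 Y1 Y e μ0 μ1)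
    {q τ e' : Ω → ℝ} (hq : Measurable[m] q) {C : ℝ} (hqC : ∀ᵐ ω ∂P, |q ω| ≤ C)
    (hτ : Measurable[m] τ) (he' : Measurable[m] e') (hμ0 : Measurable[m] μ0)
    (hμ1 : Measurable[m] μ1) (hτi : Integrable τ P) (hμ0i : Integrable μ0 P)
    (hμ1i : Integrable μ1 P) {c : ℝ} (hc : 0 < c) (he'c : ∀ᵐ ω ∂P, c ≤ e' ω ∧ e' ω ≤ 1 - c) :
    P[aipwResidual W Y q τ e' μ0 μ1|m] =ᵐ[P] fun ω => q ω * (τ ω - (μ1 ω - μ0 ω)) :=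
  (h.condExp_aipwResidual_of_le_of_le hq hqC hτ he' hμ0 hμ1 hτi hμ0i hμ1i hc he'c).trans
    (ae_of_all _ fun ω => by simp)

theorem exists_hasDerivAt_condExp_aipwResidual
    (h : PotentialOutcomeModel m P W Y0 Y1 Y e μ0 μ1) {q k k0 k1 : Ω → ℝ}
    (hq : Measurable[m] q) {C : ℝ} (hqC : ∀ᵐ ω ∂P, |q ω| ≤ C) (he : Measurable[m] e)
    (hμ0 : Measurable[m] μ0) (hμ1 : Measurable[m] μ1) (hμ0i : Integrable μ0 P)
    (hμ1i : Integrable μ1 P) (hk : Measurable[m] k) (hk0 : Measurable[m] k0)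
    (hk1 : Measurable[m] k1) (hk0i : Integrable k0 P) (hk1i : Integrable k1 P) {δ c : ℝ}
    (hδ : 0 < δ) (hc : 0 < c)
    (hek : ∀ t : ℝ, |t| < δ → ∀ᵐ ω ∂P, c ≤ e ω + t * k ω ∧ e ω + t * k ω ≤ 1 - c) :
    ∃ g : ℝ → Ω → ℝ,
      (∀ t : ℝ, g t =ᵐ[P] P[aipwResidual W Y q (fun ω => μ1 ω - μ0 ω)
        (fun ω => e ω + t * k ω) (fun ω => μ0 ω + t * k0 ω) (fun ω => μ1 ω + t * k1 ω)|m]) ∧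
      ∀ᵐ ω ∂P, HasDerivAt (fun t => g t ω) 0 0 := by
  set F : ℝ → Ω → ℝ := fun t ω =>
    q ω * ((μ1 ω - μ0 ω) - ((μ1 ω + t * k1 ω) - (μ0 ω + t * k0 ω)))
    - q ω / (e ω + t * k ω) * (e ω * (μ1 ω - (μ1 ω + t * k1 ω)))
    + q ω / (1 - (e ω + t * k ω)) * ((1 - e ω) * (μ0 ω - (μ0 ω + t * k0 ω)))
  refine ⟨fun t => if |t| < δ then F t else P[aipwResidual W Y q (fun ω => μ1 ω - μ0 ω)
    (fun ω => e ω + t * k ω) (fun ω => μ0 ω + t * k0 ω) (fun ω => μ1 ω + t * k1 ω)|m],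
    fun t => ?_, ?_⟩
  · dsimp only
    split_ifs with ht
    · exact (h.condExp_aipwResidual_of_le_of_le hq hqC (hμ1.sub hμ0)
        (he.add (measurable_const.mul hk)) (hμ0.add (measurable_const.mul hk0))
        (hμ1.add (measurable_const.mul hk1)) (hμ1i.sub hμ0i) (hμ0i.add (hk0i.const_mul t))
        (hμ1i.add (hk1i.const_mul t)) hc (hek t ht)).symm
    · rfl
  · filter_upwards [hek 0 (by simpa using hδ)] with ω hω
    simp only [zero_mul, add_zero] at hω
    refine HasDerivAt.congr_of_eventuallyEq (hasDerivAt_aipw_perturbation (q := q ω) (k := k ω)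
      (k0 := k0 ω) (k1 := k1 ω) (μ0 := μ0 ω) (μ1 := μ1 ω) (by linarith [hω.1])
      (by linarith [hω.2])) ?_
    filter_upwards [Metric.ball_mem_nhds (0 : ℝ) hδ] with t ht
    rw [Metric.mem_ball, dist_zero_right, Real.norm_eq_abs] at ht
    simp only [if_pos ht, F]

end PotentialOutcomeModel

end

theorem stmt_10_general
    {Ω 𝒳 : Type*} [MeasurableSpace Ω] [StandardBorelSpace Ω] [MeasurableSpace 𝒳]
    (P : Measure Ω) [IsProbabilityMeasure P]
    (X : Ω → 𝒳) (hX : Measurable X)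
    (W : Ω → ℝ) (hWm : Measurable W) (hWbin : ∀ ω, W ω = 0 ∨ W ω = 1)
    (Y0 Y1 : Ω → ℝ) (hY0m : Measurable Y0) (hY1m : Measurable Y1)
    (CY : ℝ) (hYbdd : ∀ ω, |Y0 ω| ≤ CY ∧ |Y1 ω| ≤ CY)
    (Y : Ω → ℝ) (hSUTVA : ∀ ω, Y ω = W ω * Y1 ω + (1 - W ω) * Y0 ω)
    (hUnconf : CondIndepFun (sigmaAlg X) hX.comap_le W (fun ω => (Y0 ω, Y1 ω)) P)
    (e : 𝒳 → ℝ) (hem : Measurable e)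
    (hprop : P[W|sigmaAlg X] =ᵐ[P] (fun ω => e (X ω)))
    (hoverlap : ∀ᵐ ω ∂P, 0 < e (X ω) ∧ e (X ω) < 1)
    (μ0 μ1 : 𝒳 → ℝ) (hμ0m : Measurable μ0) (hμ1m : Measurable μ1)
    (hμ0c : P[Y0|sigmaAlg X] =ᵐ[P] (fun ω => μ0 (X ω)))
    (hμ1c : P[Y1|sigmaAlg X] =ᵐ[P] (fun ω => μ1 (X ω)))
    (r : 𝒳 → ℝ) (hrm : Measurable r) (hr01 : ∀ x, 0 < r x ∧ r x < 1)
    (M : ℝ)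
    (hM : ∀ᵐ ω ∂P, r (X ω) * (1 - r (X ω)) / (e (X ω) * (1 - e (X ω))) ≤ M)
    (τt m0t m1t : 𝒳 → ℝ) (hτtm : Measurable τt) (hm0tm : Measurable m0t) (hm1tm : Measurable m1t)
    (Cτt : ℝ) (hτtb : ∀ x, |τt x| ≤ Cτt)
    (Cmt : ℝ) (hmtb : ∀ x, |m0t x| ≤ Cmt ∧ |m1t x| ≤ Cmt)
    (et : 𝒳 → ℝ) (hetm : Measurable et)
    (ce : ℝ) (hce : 0 < ce) (hetb : ∀ᵐ ω ∂P, ce ≤ et (X ω) ∧ et (X ω) ≤ 1 - ce) :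
    (P[(fun ω => r (X ω) * (1 - r (X ω)) * (τt (X ω) - (m1t (X ω) - m0t (X ω)) - (W ω - e (X ω)) * (Y ω - W ω * m1t (X ω) - (1 - W ω) * m0t (X ω)) / (e (X ω) * (1 - e (X ω)))))|sigmaAlg X] =ᵐ[P] (fun ω => r (X ω) * (1 - r (X ω)) * (τt (X ω) - (μ1 (X ω) - μ0 (X ω))))) ∧
    (P[(fun ω => r (X ω) * (1 - r (X ω)) * (τt (X ω) - (μ1 (X ω) - μ0 (X ω)) - (W ω - et (X ω)) * (Y ω - W ω * μ1 (X ω) - (1 - W ω) * μ0 (X ω)) / (et (X ω) * (1 - et (X ω)))))|sigmaAlg X] =ᵐ[P] (fun ω => r (X ω) * (1 - r (X ω)) * (τt (X ω) - (μ1 (X ω) - μ0 (X ω))))) ∧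
    ((P[(fun ω => r (X ω) * (1 - r (X ω)) * (τt (X ω) - (m1t (X ω) - m0t (X ω)) - (W ω - e (X ω)) * (Y ω - W ω * m1t (X ω) - (1 - W ω) * m0t (X ω)) / (e (X ω) * (1 - e (X ω)))))|sigmaAlg X] =ᵐ[P] 0 ∧
      P[(fun ω => r (X ω) * (1 - r (X ω)) * (τt (X ω) - (μ1 (X ω) - μ0 (X ω)) - (W ω - et (X ω)) * (Y ω - W ω * μ1 (X ω) - (1 - W ω) * μ0 (X ω)) / (et (X ω) * (1 - et (X ω)))))|sigmaAlg X] =ᵐ[P] 0) ↔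
      (∀ᵐ ω ∂P, τt (X ω) = μ1 (X ω) - μ0 (X ω))) ∧
    (∀ he h0 h1 : 𝒳 → ℝ, Measurable he → Measurable h0 → Measurable h1 →
      (∃ C : ℝ, ∀ x, |he x| ≤ C) → (∃ C : ℝ, ∀ x, |h0 x| ≤ C) → (∃ C : ℝ, ∀ x, |h1 x| ≤ C) →
      (∃ δ > (0:ℝ), ∃ c > (0:ℝ), ∀ t : ℝ, |t| < δ →
        ∀ᵐ ω ∂P, c ≤ e (X ω) + t * he (X ω) ∧ e (X ω) + t * he (X ω) ≤ 1 - c) →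
      ∃ g : ℝ → Ω → ℝ,
        (∀ t : ℝ, g t =ᵐ[P]
          P[(fun ω => r (X ω) * (1 - r (X ω)) * ((μ1 (X ω) - μ0 (X ω)) - ((μ1 (X ω) + t * h1 (X ω)) - (μ0 (X ω) + t * h0 (X ω))) - (W ω - (e (X ω) + t * he (X ω))) * (Y ω - W ω * (μ1 (X ω) + t * h1 (X ω)) - (1 - W ω) * (μ0 (X ω) + t * h0 (X ω))) / ((e (X ω) + t * he (X ω)) * (1 - (e (X ω) + t * he (X ω))))))|sigmaAlg X]) ∧
        (∀ᵐ ω ∂P, HasDerivAt (fun t => g t ω) 0 0)) := by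
  have hXm {f : 𝒳 → ℝ} (hf : Measurable f) : Measurable[sigmaAlg X] fun ω => f (X ω) :=
    hf.comp (comap_measurable X)
  have hXi {f : 𝒳 → ℝ} (hf : Measurable f) {C : ℝ} (hC : ∀ x, |f x| ≤ C) :
      Integrable (fun ω => f (X ω)) P :=
    .of_bound (hf.comp hX).aestronglyMeasurable C (ae_of_all _ fun ω => hC (X ω))
  have hmodel := PotentialOutcomeModel.of_condIndepFun hX.comap_le hWm hWbin hY0m hY1m
    (.of_bound hY0m.aestronglyMeasurable CY (ae_of_all _ fun ω => (hYbdd ω).1))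
    (.of_bound hY1m.aestronglyMeasurable CY (ae_of_all _ fun ω => (hYbdd ω).2))
    hSUTVA hUnconf hprop hμ0c hμ1c
  have hμ0i : Integrable (fun ω => μ0 (X ω)) P := integrable_condExp.congr hμ0c
  have hμ1i : Integrable (fun ω => μ1 (X ω)) P := integrable_condExp.congr hμ1c
  have hq (x : 𝒳) : 0 < r x * (1 - r x) ∧ |r x * (1 - r x)| ≤ 1 := by
    obtain ⟨h0, h1⟩ := hr01 x
    have hpos : 0 < r x * (1 - r x) := mul_pos h0 (by linarith)
    exact ⟨hpos, by rw [abs_of_pos hpos]; nlinarith⟩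
  have hqm : Measurable[sigmaAlg X] fun ω => r (X ω) * (1 - r (X ω)) :=
    hXm (hrm.mul (measurable_const.sub hrm))
  have hqC : ∀ᵐ ω ∂P, |r (X ω) * (1 - r (X ω))| ≤ 1 := ae_of_all _ fun ω => (hq (X ω)).2
  have hP1 := hmodel.condExp_aipwResidual_of_propensity hqm
    (ae_of_all _ fun ω => (hq (X ω)).1.le) (hXm hem) (hXm hτtm) (hXm hm0tm) (hXm hm1tm)
    (hXi hτtm hτtb) (hXi hm0tm fun x => (hmtb x).1) (hXi hm1tm fun x => (hmtb x).2) hoverlap hM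
  have hP2 := hmodel.condExp_aipwResidual_of_outcome hqm hqC (hXm hτtm) (hXm hetm) (hXm hμ0m)
    (hXm hμ1m) (hXi hτtm hτtb) hμ0i hμ1i hce hetb
  refine ⟨hP1, hP2, ⟨fun h => ?_, fun h => ?_⟩, ?_⟩
  · filter_upwards [hP1.symm.trans h.1] with ω hω
    exact sub_eq_zero.mp ((mul_eq_zero.mp hω).resolve_left (hq (X ω)).1.ne')
  · have hz : (fun ω => r (X ω) * (1 - r (X ω)) * (τt (X ω) - (μ1 (X ω) - μ0 (X ω)))) =ᵐ[P] 0 := by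
      filter_upwards [h] with ω hω
      simp [hω]
    exact ⟨hP1.trans hz, hP2.trans hz⟩
  · rintro he h0 h1 hhe hh0 hh1 - ⟨C0, hC0⟩ ⟨C1, hC1⟩ ⟨δ, hδ, c, hc, hbound⟩
    exact hmodel.exists_hasDerivAt_condExp_aipwResidual hqm hqC (hXm hem) (hXm hμ0m) (hXm hμ1m)
      hμ0i hμ1i (hXm hhe) (hXm hh0) (hXm hh1) (hXi hh0 hC0) (hXi hh1 hC1) hδ hc hbound

theorem stmt_10
    {Ω 𝒳 : Type*} [MeasurableSpace Ω] [StandardBorelSpace Ω] [MeasurableSpace 𝒳]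
    (P : Measure Ω) [IsProbabilityMeasure P]
    (X : Ω → 𝒳) (hX : Measurable X)
    (W : Ω → ℝ) (hWm : Measurable W) (hWbin : ∀ ω, W ω = 0 ∨ W ω = 1)
    (Y0 Y1 : Ω → ℝ) (hY0m : Measurable Y0) (hY1m : Measurable Y1)
    (CY : ℝ) (hYbdd : ∀ ω, |Y0 ω| ≤ CY ∧ |Y1 ω| ≤ CY)
    (Y : Ω → ℝ) (hSUTVA : ∀ ω, Y ω = W ω * Y1 ω + (1 - W ω) * Y0 ω)
    (hUnconf : CondIndepFun (sigmaAlg X) hX.comap_le W (fun ω => (Y0 ω, Y1 ω)) P)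
    (e : 𝒳 → ℝ) (hem : Measurable e)
    (hprop : P[W|sigmaAlg X] =ᵐ[P] (fun ω => e (X ω)))
    (hoverlap : ∀ᵐ ω ∂P, 0 < e (X ω) ∧ e (X ω) < 1)
    (μ0 μ1 : 𝒳 → ℝ) (hμ0m : Measurable μ0) (hμ1m : Measurable μ1)
    (Cμ : ℝ) (hμbdd : ∀ x, |μ0 x| ≤ Cμ ∧ |μ1 x| ≤ Cμ)
    (hμ0c : P[Y0|sigmaAlg X] =ᵐ[P] (fun ω => μ0 (X ω)))
    (hμ1c : P[Y1|sigmaAlg X] =ᵐ[P] (fun ω => μ1 (X ω)))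
    (r : 𝒳 → ℝ) (hrm : Measurable r) (hr01 : ∀ x, 0 < r x ∧ r x < 1)
    (M : ℝ) (hMpos : 0 < M)
    (hM : ∀ᵐ ω ∂P, r (X ω) * (1 - r (X ω)) / (e (X ω) * (1 - e (X ω))) ≤ M)
    (τt m0t m1t : 𝒳 → ℝ) (hτtm : Measurable τt) (hm0tm : Measurable m0t) (hm1tm : Measurable m1t)
    (Cτt : ℝ) (hτtb : ∀ x, |τt x| ≤ Cτt)
    (Cmt : ℝ) (hmtb : ∀ x, |m0t x| ≤ Cmt ∧ |m1t x| ≤ Cmt)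
    (et : 𝒳 → ℝ) (hetm : Measurable et)
    (ce : ℝ) (hce : 0 < ce) (hetb : ∀ᵐ ω ∂P, ce ≤ et (X ω) ∧ et (X ω) ≤ 1 - ce) :
    (P[(fun ω => r (X ω) * (1 - r (X ω)) * (τt (X ω) - (m1t (X ω) - m0t (X ω)) - (W ω - e (X ω)) * (Y ω - W ω * m1t (X ω) - (1 - W ω) * m0t (X ω)) / (e (X ω) * (1 - e (X ω)))))|sigmaAlg X] =ᵐ[P] (fun ω => r (X ω) * (1 - r (X ω)) * (τt (X ω) - (μ1 (X ω) - μ0 (X ω))))) ∧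
    (P[(fun ω => r (X ω) * (1 - r (X ω)) * (τt (X ω) - (μ1 (X ω) - μ0 (X ω)) - (W ω - et (X ω)) * (Y ω - W ω * μ1 (X ω) - (1 - W ω) * μ0 (X ω)) / (et (X ω) * (1 - et (X ω)))))|sigmaAlg X] =ᵐ[P] (fun ω => r (X ω) * (1 - r (X ω)) * (τt (X ω) - (μ1 (X ω) - μ0 (X ω))))) ∧
    ((P[(fun ω => r (X ω) * (1 - r (X ω)) * (τt (X ω) - (m1t (X ω) - m0t (X ω)) - (W ω - e (X ω)) * (Y ω - W ω * m1t (X ω) - (1 - W ω) * m0t (X ω)) / (e (X ω) * (1 - e (X ω)))))|sigmaAlg X] =ᵐ[P] 0 ∧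
      P[(fun ω => r (X ω) * (1 - r (X ω)) * (τt (X ω) - (μ1 (X ω) - μ0 (X ω)) - (W ω - et (X ω)) * (Y ω - W ω * μ1 (X ω) - (1 - W ω) * μ0 (X ω)) / (et (X ω) * (1 - et (X ω)))))|sigmaAlg X] =ᵐ[P] 0) ↔
      (∀ᵐ ω ∂P, τt (X ω) = μ1 (X ω) - μ0 (X ω))) ∧
    (∀ he h0 h1 : 𝒳 → ℝ, Measurable he → Measurable h0 → Measurable h1 →
      (∃ C : ℝ, ∀ x, |he x| ≤ C) → (∃ C : ℝ, ∀ x, |h0 x| ≤ C) → (∃ C : ℝ, ∀ x, |h1 x| ≤ C) →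
      (∃ δ > (0:ℝ), ∃ c > (0:ℝ), ∀ t : ℝ, |t| < δ →
        ∀ᵐ ω ∂P, c ≤ e (X ω) + t * he (X ω) ∧ e (X ω) + t * he (X ω) ≤ 1 - c) →
      ∃ g : ℝ → Ω → ℝ,
        (∀ t : ℝ, g t =ᵐ[P]
          P[(fun ω => r (X ω) * (1 - r (X ω)) * ((μ1 (X ω) - μ0 (X ω)) - ((μ1 (X ω) + t * h1 (X ω)) - (μ0 (X ω) + t * h0 (X ω))) - (W ω - (e (X ω) + t * he (X ω))) * (Y ω - W ω * (μ1 (X ω) + t * h1 (X ω)) - (1 - W ω) * (μ0 (X ω) + t * h0 (X ω))) / ((e (X ω) + t * he (X ω)) * (1 - (e (X ω) + t * he (X ω))))))|sigmaAlg X]) ∧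
        (∀ᵐ ω ∂P, HasDerivAt (fun t => g t ω) 0 0)) :=
  stmt_10_general P X hX W hWm hWbin Y0 Y1 hY0m hY1m CY hYbdd Y hSUTVA hUnconf e hem hprop hoverlap
    μ0 μ1 hμ0m hμ1m hμ0c hμ1c r hrm hr01 M hM τt m0t m1t hτtm hm0tm hm1tm Cτt hτtb Cmt hmtb et hetm
    ce hce hetb
end

section
/- Let 𝕎̃ ⊂ 𝕎 be a finite set of treatment values and κ = (κ_w)_{w∈𝕎̃} real constants; let γ:𝕎×𝒳→ℝ and φ:𝕎×𝒳→ℝ_{>0} be bounded measurable nuisance functions; let S̃:𝒳→ℝ be positive, bounded and measurable with S̃(X) ≤ M·∏_{w∈𝕎̃} φ(w,X) a.s. for some M > 0. Define the augmented SPW residual Ψ = S̃(X)·[ Σ_{w∈𝕎̃} κ_w·( γ(w,X) + 1{W=w}·(Y − γ(w,X))/φ(w,X) ) − Σ_{w∈𝕎̃} κ_w·μ(w,X) ]. If φ ≡ p or γ ≡ μ, then under unconfoundedness, SUTVA, population overlap and bounded outcomes, E[Ψ | σ(X)] = 0 a.s. and E[Ψ² | σ(X)] is a.s. finite. -/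
open MeasureTheory ProbabilityTheory Filter Set

/-!
On `{W = w}` the observed outcome is `Y_w`, so the summand of `Ψ` for treatment `w` is
`S̃κ_w(γ_w - μ_w)(X) + (S̃κ_w/φ_w)(X) · 1{W=w}(Y_w - γ_w(X))`. Unconfoundedness factorises
`E[1{W=w} Y_w | X] = p_w(X) μ_w(X)`, hence the conditional mean of the summand is
`S̃κ_w(γ_w - μ_w)(1 - p_w/φ_w)(X)`, which vanishes as soon as `φ_w = p_w` or `γ_w = μ_w`.
The condition `S̃ ≤ M ∏ φ` keeps `S̃/φ_w` bounded, so `Ψ` is bounded and so is `E[Ψ² | X]`.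
-/

theorem ProbabilityTheory.CondIndepFun.condExp_mul {Ω : Type*} {m : MeasurableSpace Ω}
    [mΩ : MeasurableSpace Ω] [StandardBorelSpace Ω] {μ : Measure Ω} [IsFiniteMeasure μ]
    {hm : m ≤ mΩ} {f g : Ω → ℝ} (hfg : CondIndepFun m hm f g μ)
    (hf : Measurable f) (hg : Measurable g) (hfi : Integrable f μ) (hgi : Integrable g μ)
    (hfgi : Integrable (f * g) μ) :
    μ[f * g | m] =ᵐ[μ] μ[f | m] * μ[g | m] := by
  -- Conditional independence says that, a.e., the `condExpKernel`-law of `(f, g)` is the product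
  -- of the laws of `f` and `g`; integrate `z.1 * z.2` against both sides.
  have hker := ae_of_ae_trim hm ((condIndepFun_iff_map_prod_eq_prod_map_map hf hg).1 hfg)
  filter_upwards [condExp_ae_eq_integral_condExpKernel hm hfgi,
    condExp_ae_eq_integral_condExpKernel hm hfi, condExp_ae_eq_integral_condExpKernel hm hgi,
    hker] with ω hfg_ω hf_ω hg_ω hker_ω
  rw [hfg_ω, Pi.mul_apply, hf_ω, hg_ω]
  calc ∫ y, (f * g) y ∂condExpKernel μ m ω
      = ∫ z, z.1 * z.2 ∂(condExpKernel μ m).map (fun ω ↦ (f ω, g ω)) ω := by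
        rw [Kernel.map_apply _ (hf.prodMk hg), integral_map (hf.prodMk hg).aemeasurable
          (by fun_prop)]
        rfl
    _ = (∫ x, x ∂(condExpKernel μ m).map f ω) * ∫ y, y ∂(condExpKernel μ m).map g ω := by
        rw [hker_ω, Kernel.prod_apply]
        exact integral_prod_mul (fun x : ℝ ↦ x) (fun y : ℝ ↦ y)
    _ = (∫ y, f y ∂condExpKernel μ m ω) * ∫ y, g y ∂condExpKernel μ m ω := by
        rw [Kernel.map_apply _ hf, Kernel.map_apply _ hg, integral_map hf.aemeasurable
          (by fun_prop), integral_map hg.aemeasurable (by fun_prop)]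

theorem div_le_mul_pow_of_le_mul_prod {ι : Type*} {s : Finset ι} {a : ι → ℝ} {C M t : ℝ} {i : ι}
    (hi : i ∈ s) (ha : ∀ j ∈ s, 0 < a j ∧ a j ≤ C) (hM : 0 ≤ M) (ht : t ≤ M * ∏ j ∈ s, a j) :
    t / a i ≤ M * C ^ (s.card - 1) := by
  classical
  have hrest : ∏ j ∈ s.erase i, a j ≤ C ^ (s.card - 1) := by
    calc ∏ j ∈ s.erase i, a j ≤ ∏ _j ∈ s.erase i, C :=
          Finset.prod_le_prod (fun j hj ↦ (ha j (Finset.mem_of_mem_erase hj)).1.le)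
            (fun j hj ↦ (ha j (Finset.mem_of_mem_erase hj)).2)
      _ = C ^ (s.card - 1) := by rw [Finset.prod_const, Finset.card_erase_of_mem hi]
  rw [div_le_iff₀ (ha i hi).1]
  calc t ≤ M * ∏ j ∈ s, a j := ht
    _ = M * (∏ j ∈ s.erase i, a j) * a i := by rw [← Finset.mul_prod_erase s a hi]; ring
    _ ≤ M * C ^ (s.card - 1) * a i := by gcongr; exact (ha i hi).1.le

theorem condExp_finsetSum_ae_eq_zero {Ω E ι : Type*} {m mΩ : MeasurableSpace Ω} {μ : Measure Ω}
    [NormedAddCommGroup E] [NormedSpace ℝ E] [CompleteSpace E] {s : Finset ι} {f : ι → Ω → E}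
    (hfi : ∀ i ∈ s, Integrable (f i) μ) (hf : ∀ i ∈ s, μ[f i | m] =ᵐ[μ] 0) :
    μ[fun ω ↦ ∑ i ∈ s, f i ω | m] =ᵐ[μ] 0 := by
  rw [← Finset.sum_fn]
  filter_upwards [condExp_finsetSum hfi m, (eventually_all_finset s).2 hf] with ω hsum hzero
  rw [hsum, Finset.sum_apply]
  exact Finset.sum_eq_zero hzero

theorem ae_condExp_sq_le {Ω : Type*} {m mΩ : MeasurableSpace Ω} {μ : Measure Ω} {f : Ω → ℝ}
    {B : ℝ} (hf : ∀ᵐ ω ∂μ, |f ω| ≤ B) : ∀ᵐ ω ∂μ, μ[fun ω ↦ f ω ^ 2 | m] ω ≤ B ^ 2 := by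
  filter_upwards [ae_bdd_abs_condExp_of_ae_bdd_abs (m := m) (hf.mono fun ω hω ↦
    (abs_pow _ 2).trans_le (pow_le_pow_left₀ (abs_nonneg _) hω 2))] with ω hω
  exact (le_abs_self _).trans hω

theorem abs_mul_mul_sub_le {a b c d A C D : ℝ} (ha : 0 < a ∧ a ≤ A) (hc : |c| ≤ C)
    (hd : |d| ≤ D) : |a * b * (c - d)| ≤ A * |b| * (C + D) := by
  rw [abs_mul, abs_mul, abs_of_pos ha.1]
  exact mul_le_mul (mul_le_mul_of_nonneg_right ha.2 (abs_nonneg b))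
    ((abs_sub c d).trans (add_le_add hc hd)) (abs_nonneg _)
    (mul_nonneg (ha.1.le.trans ha.2) (abs_nonneg b))

section AugmentedTerm

variable {Ω 𝒳 𝕎 : Type*} [DecidableEq 𝕎]

noncomputable def treatmentIndicator (W : Ω → 𝕎) (w : 𝕎) (ω : Ω) : ℝ :=
  if W ω = w then 1 else 0

/-- The summand of `Ψ` belonging to treatment `w`, so that `Ψ = ∑ w ∈ 𝕎̃, ψ_w`. -/
noncomputable def augmentedTerm (X : Ω → 𝒳) (W : Ω → 𝕎) (Y : Ω → ℝ) (St : 𝒳 → ℝ) (w : 𝕎)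
    (κ : ℝ) (γ φ μ : 𝒳 → ℝ) (ω : Ω) : ℝ :=
  St (X ω) * (κ * (γ (X ω) + treatmentIndicator W w ω * (Y ω - γ (X ω)) / φ (X ω)) -
    κ * μ (X ω))

variable {X : Ω → 𝒳} {W : Ω → 𝕎} {Y Yw : Ω → ℝ} {St γ φ μ p : 𝒳 → ℝ} {w : 𝕎}
  {κ CY Cγ CSt Cμ K : ℝ}

theorem abs_treatmentIndicator_le (ω : Ω) : |treatmentIndicator W w ω| ≤ 1 := by
  unfold treatmentIndicator
  split_ifs <;> simp

theorem abs_treatmentIndicator_mul_le {f : Ω → ℝ} {C : ℝ} (hf : ∀ ω, |f ω| ≤ C) (ω : Ω) :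
    |treatmentIndicator W w ω * f ω| ≤ C := by
  simpa [abs_mul] using mul_le_mul (abs_treatmentIndicator_le ω) (hf ω) (abs_nonneg _) zero_le_one

theorem abs_sub_comp_le_add (hYwb : ∀ ω, |Yw ω| ≤ CY) (hγb : ∀ x, |γ x| ≤ Cγ) (ω : Ω) :
    |Yw ω - γ (X ω)| ≤ CY + Cγ :=
  (abs_sub _ _).trans (add_le_add (hYwb ω) (hγb _))

theorem augmentedTerm_eq (hY : ∀ ω, W ω = w → Y ω = Yw ω) :
    augmentedTerm X W Y St w κ γ φ μ =
      (fun ω ↦ St (X ω) * κ * (γ (X ω) - μ (X ω))) +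
      (fun ω ↦ St (X ω) * κ / φ (X ω)) * fun ω ↦ treatmentIndicator W w ω * (Yw ω - γ (X ω)) := by
  funext ω
  have hobs : treatmentIndicator W w ω * Y ω = treatmentIndicator W w ω * Yw ω := by
    unfold treatmentIndicator
    split_ifs with h
    · rw [hY ω h]
    · simp
  simp only [augmentedTerm, Pi.add_apply, Pi.mul_apply, mul_sub, hobs]
  ring

variable [MeasurableSpace Ω] {P : Measure Ω}

theorem measurable_treatmentIndicator [MeasurableSpace 𝕎] [MeasurableSingletonClass 𝕎]
    (hW : Measurable W) : Measurable (treatmentIndicator W w) :=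
  Measurable.ite (hW (measurableSet_singleton w)) measurable_const measurable_const

theorem integrable_treatmentIndicator_mul [MeasurableSpace 𝕎] [MeasurableSingletonClass 𝕎]
    [IsFiniteMeasure P] (hW : Measurable W) {f : Ω → ℝ} (hf : Measurable f) {C : ℝ}
    (hfC : ∀ ω, |f ω| ≤ C) : Integrable (fun ω ↦ treatmentIndicator W w ω * f ω) P :=
  .of_bound ((measurable_treatmentIndicator hW).mul hf).aestronglyMeasurable C
    (ae_of_all _ (abs_treatmentIndicator_mul_le hfC))

theorem ae_abs_weight_le (hSt : ∀ x, 0 < St x) (hφ : ∀ x, 0 < φ x)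
    (hK : ∀ᵐ ω ∂P, St (X ω) / φ (X ω) ≤ K) :
    ∀ᵐ ω ∂P, |St (X ω) * κ / φ (X ω)| ≤ |κ| * K := by
  filter_upwards [hK] with ω hω
  rw [mul_div_right_comm, abs_mul, abs_of_pos (div_pos (hSt _) (hφ _)), mul_comm]
  exact mul_le_mul_of_nonneg_left hω (abs_nonneg κ)

theorem ae_abs_augmentedTerm_le (hY : ∀ ω, W ω = w → Y ω = Yw ω) (hYwb : ∀ ω, |Yw ω| ≤ CY)
    (hγb : ∀ x, |γ x| ≤ Cγ) (hμb : ∀ x, |μ x| ≤ Cμ) (hStb : ∀ x, 0 < St x ∧ St x ≤ CSt)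
    (hφ : ∀ x, 0 < φ x) (hK : ∀ᵐ ω ∂P, St (X ω) / φ (X ω) ≤ K) :
    ∀ᵐ ω ∂P, |augmentedTerm X W Y St w κ γ φ μ ω| ≤
      CSt * |κ| * (Cγ + Cμ) + |κ| * K * (CY + Cγ) := by
  filter_upwards [ae_abs_weight_le (κ := κ) (fun x ↦ (hStb x).1) hφ hK] with ω hω
  rw [augmentedTerm_eq hY, Pi.add_apply, Pi.mul_apply]
  refine (abs_add_le _ _).trans (add_le_add (abs_mul_mul_sub_le (hStb _) (hγb _) (hμb _)) ?_)
  rw [abs_mul]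
  exact mul_le_mul hω (abs_treatmentIndicator_mul_le (abs_sub_comp_le_add hYwb hγb) ω)
    (abs_nonneg _) ((abs_nonneg _).trans hω)

end AugmentedTerm

section ConditionalMean

variable {Ω 𝒳 𝕎 : Type*} [MeasurableSpace Ω] [MeasurableSpace 𝒳] [DecidableEq 𝕎]
  [MeasurableSpace 𝕎] [MeasurableSingletonClass 𝕎] {P : Measure Ω} [IsFiniteMeasure P]
  {X : Ω → 𝒳} {W : Ω → 𝕎} {Y Yw : Ω → ℝ} {St γ φ μ p : 𝒳 → ℝ} {w : 𝕎}
  {κ CY Cγ CSt Cμ K : ℝ}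

theorem condExp_treatmentIndicator_mul_sub [StandardBorelSpace Ω] (hX : Measurable X)
    (hW : Measurable W) (hYw : Measurable Yw) (hYwb : ∀ ω, |Yw ω| ≤ CY)
    (hUnconf : CondIndepFun (sigmaAlg X) hX.comap_le W Yw P)
    (hprop : P[treatmentIndicator W w | sigmaAlg X] =ᵐ[P] fun ω ↦ p (X ω))
    (hμc : P[Yw | sigmaAlg X] =ᵐ[P] fun ω ↦ μ (X ω))
    (hγm : Measurable γ) (hγb : ∀ x, |γ x| ≤ Cγ) :
    P[fun ω ↦ treatmentIndicator W w ω * (Yw ω - γ (X ω)) | sigmaAlg X] =ᵐ[P]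
      fun ω ↦ p (X ω) * (μ (X ω) - γ (X ω)) := by
  have hD := measurable_treatmentIndicator (w := w) hW
  have hDi : Integrable (treatmentIndicator W w) P :=
    .of_bound hD.aestronglyMeasurable 1 (ae_of_all _ abs_treatmentIndicator_le)
  have hYwi : Integrable Yw P := .of_bound hYw.aestronglyMeasurable CY (ae_of_all _ hYwb)
  have hDYi : Integrable (treatmentIndicator W w * Yw) P :=
    integrable_treatmentIndicator_mul hW hYw hYwb
  have hγX : StronglyMeasurable[sigmaAlg X] (fun ω ↦ γ (X ω)) :=
    (hγm.comp (comap_measurable X)).stronglyMeasurable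
  have hcross : P[treatmentIndicator W w * Yw | sigmaAlg X] =ᵐ[P]
      P[treatmentIndicator W w | sigmaAlg X] * P[Yw | sigmaAlg X] :=
    (hUnconf.comp (measurable_treatmentIndicator (W := id) measurable_id) measurable_id).condExp_mul
      hD hYw hDi hYwi hDYi
  have hpull : P[(fun ω ↦ γ (X ω)) * treatmentIndicator W w | sigmaAlg X] =ᵐ[P]
      (fun ω ↦ γ (X ω)) * P[treatmentIndicator W w | sigmaAlg X] :=
    condExp_stronglyMeasurable_mul_of_bound hX.comap_le hγX hDi Cγ (ae_of_all _ fun ω ↦ hγb _)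
  have hsplit : (fun ω ↦ treatmentIndicator W w ω * (Yw ω - γ (X ω))) =
      treatmentIndicator W w * Yw - (fun ω ↦ γ (X ω)) * treatmentIndicator W w := by
    funext ω; simp only [Pi.sub_apply, Pi.mul_apply]; ring
  have hγDi : Integrable ((fun ω ↦ γ (X ω)) * treatmentIndicator W w) P :=
    hDi.bdd_mul (hγm.comp hX).aestronglyMeasurable (ae_of_all _ fun ω ↦ hγb _)
  rw [hsplit]
  filter_upwards [condExp_sub hDYi hγDi (sigmaAlg X), hcross, hpull, hprop, hμc]
    with ω hsub hcross hpull hprop hμc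
  simp only [hsub, Pi.sub_apply, hcross, hpull, Pi.mul_apply, hprop, hμc]
  ring

theorem integrable_regressionTerm (hX : Measurable X) (hγm : Measurable γ)
    (hγb : ∀ x, |γ x| ≤ Cγ) (hμm : Measurable μ) (hμb : ∀ x, |μ x| ≤ Cμ) (hStm : Measurable St)
    (hStb : ∀ x, 0 < St x ∧ St x ≤ CSt) :
    Integrable (fun ω ↦ St (X ω) * κ * (γ (X ω) - μ (X ω))) P :=
  .of_bound (((hStm.mul_const κ).mul (hγm.sub hμm)).comp hX).aestronglyMeasurable _
    (ae_of_all _ fun _ ↦ abs_mul_mul_sub_le (hStb _) (hγb _) (hμb _))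

theorem integrable_treatmentIndicator_mul_sub (hX : Measurable X) (hW : Measurable W)
    (hYw : Measurable Yw) (hYwb : ∀ ω, |Yw ω| ≤ CY) (hγm : Measurable γ) (hγb : ∀ x, |γ x| ≤ Cγ) :
    Integrable (fun ω ↦ treatmentIndicator W w ω * (Yw ω - γ (X ω))) P :=
  integrable_treatmentIndicator_mul hW (hYw.sub (hγm.comp hX)) (abs_sub_comp_le_add hYwb hγb)

theorem integrable_weightedResidual (hX : Measurable X) (hW : Measurable W)
    (hYw : Measurable Yw) (hYwb : ∀ ω, |Yw ω| ≤ CY) (hγm : Measurable γ) (hγb : ∀ x, |γ x| ≤ Cγ)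
    (hStm : Measurable St) (hSt : ∀ x, 0 < St x) (hφm : Measurable φ) (hφ : ∀ x, 0 < φ x)
    (hK : ∀ᵐ ω ∂P, St (X ω) / φ (X ω) ≤ K) :
    Integrable ((fun ω ↦ St (X ω) * κ / φ (X ω)) *
      fun ω ↦ treatmentIndicator W w ω * (Yw ω - γ (X ω))) P :=
  (integrable_treatmentIndicator_mul_sub hX hW hYw hYwb hγm hγb).bdd_mul
    (((hStm.comp hX).mul_const κ).div (hφm.comp hX)).aestronglyMeasurable
    (ae_abs_weight_le hSt hφ hK)

theorem integrable_augmentedTerm (hX : Measurable X) (hW : Measurable W)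
    (hY : ∀ ω, W ω = w → Y ω = Yw ω) (hYw : Measurable Yw) (hYwb : ∀ ω, |Yw ω| ≤ CY)
    (hγm : Measurable γ) (hγb : ∀ x, |γ x| ≤ Cγ) (hμm : Measurable μ) (hμb : ∀ x, |μ x| ≤ Cμ)
    (hStm : Measurable St) (hStb : ∀ x, 0 < St x ∧ St x ≤ CSt) (hφm : Measurable φ)
    (hφ : ∀ x, 0 < φ x) (hK : ∀ᵐ ω ∂P, St (X ω) / φ (X ω) ≤ K) :
    Integrable (augmentedTerm X W Y St w κ γ φ μ) P := by
  rw [augmentedTerm_eq hY]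
  exact (integrable_regressionTerm hX hγm hγb hμm hμb hStm hStb).add
    (integrable_weightedResidual hX hW hYw hYwb hγm hγb hStm (fun x ↦ (hStb x).1) hφm hφ hK)

theorem condExp_augmentedTerm [StandardBorelSpace Ω] (hX : Measurable X) (hW : Measurable W)
    (hY : ∀ ω, W ω = w → Y ω = Yw ω) (hYw : Measurable Yw) (hYwb : ∀ ω, |Yw ω| ≤ CY)
    (hUnconf : CondIndepFun (sigmaAlg X) hX.comap_le W Yw P)
    (hprop : P[treatmentIndicator W w | sigmaAlg X] =ᵐ[P] fun ω ↦ p (X ω))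
    (hμc : P[Yw | sigmaAlg X] =ᵐ[P] fun ω ↦ μ (X ω))
    (hγm : Measurable γ) (hγb : ∀ x, |γ x| ≤ Cγ) (hμm : Measurable μ) (hμb : ∀ x, |μ x| ≤ Cμ)
    (hStm : Measurable St) (hStb : ∀ x, 0 < St x ∧ St x ≤ CSt) (hφm : Measurable φ)
    (hφ : ∀ x, 0 < φ x) (hK : ∀ᵐ ω ∂P, St (X ω) / φ (X ω) ≤ K) :
    P[augmentedTerm X W Y St w κ γ φ μ | sigmaAlg X] =ᵐ[P]
      fun ω ↦ St (X ω) * κ * (γ (X ω) - μ (X ω)) * (1 - p (X ω) / φ (X ω)) := by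
  have hc : StronglyMeasurable[sigmaAlg X] fun ω ↦ St (X ω) * κ * (γ (X ω) - μ (X ω)) :=
    (((hStm.mul_const κ).mul (hγm.sub hμm)).comp (comap_measurable X)).stronglyMeasurable
  have hr : StronglyMeasurable[sigmaAlg X] fun ω ↦ St (X ω) * κ / φ (X ω) :=
    (((hStm.mul_const κ).div hφm).comp (comap_measurable X)).stronglyMeasurable
  have hci := integrable_regressionTerm (P := P) (κ := κ) hX hγm hγb hμm hμb hStm hStb
  rw [augmentedTerm_eq hY]
  filter_upwards [condExp_add hci (integrable_weightedResidual hX hW hYw hYwb hγm hγb hStm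
      (fun x ↦ (hStb x).1) hφm hφ hK) (sigmaAlg X),
    condExp_stronglyMeasurable_mul_of_bound hX.comap_le hr
      (integrable_treatmentIndicator_mul_sub hX hW hYw hYwb hγm hγb) _
      (by simpa only [Real.norm_eq_abs] using ae_abs_weight_le (fun x ↦ (hStb x).1) hφ hK),
    condExp_treatmentIndicator_mul_sub hX hW hYw hYwb hUnconf hprop hμc hγm hγb]
    with ω hadd hpull hnum
  rw [hadd, Pi.add_apply, condExp_of_stronglyMeasurable hX.comap_le hc hci, hpull, Pi.mul_apply,
    hnum]
  ring

end ConditionalMean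

theorem stmt_12_general
    {Ω 𝒳 𝕎 : Type*} [MeasurableSpace Ω] [StandardBorelSpace Ω] [MeasurableSpace 𝒳]
    [Fintype 𝕎] [DecidableEq 𝕎] [MeasurableSpace 𝕎] [MeasurableSingletonClass 𝕎]
    (P : Measure Ω) [IsProbabilityMeasure P]
    (X : Ω → 𝒳) (hX : Measurable X)
    (W : Ω → 𝕎) (hWm : Measurable W)
    (Ys : 𝕎 → Ω → ℝ) (hYsm : ∀ w', Measurable (Ys w'))
    (CY : ℝ) (hYbdd : ∀ w' ω, |Ys w' ω| ≤ CY)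
    (Y : Ω → ℝ)
    (hSUTVA : ∀ ω, Y ω = ∑ w' : 𝕎, (if W ω = w' then (1:ℝ) else 0) * Ys w' ω)
    (hUnconf : CondIndepFun (sigmaAlg X) hX.comap_le W (fun ω => (fun w' => Ys w' ω)) P)
    (p : 𝕎 → 𝒳 → ℝ)
    (hprop : ∀ w' : 𝕎,
      P[(fun ω => if W ω = w' then (1:ℝ) else 0)|sigmaAlg X] =ᵐ[P] (fun ω => p w' (X ω)))
    (μ : 𝕎 → 𝒳 → ℝ) (hμm : ∀ w', Measurable (μ w'))
    (Cμ : ℝ) (hμbdd : ∀ w' x, |μ w' x| ≤ Cμ)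
    (hμc : ∀ w' : 𝕎, P[Ys w'|sigmaAlg X] =ᵐ[P] (fun ω => μ w' (X ω)))
    (Wfin : Finset 𝕎) (κ : 𝕎 → ℝ)
    (γ φ : 𝕎 → 𝒳 → ℝ) (hγm : ∀ w', Measurable (γ w')) (hφm : ∀ w', Measurable (φ w'))
    (Cγ : ℝ) (hγb : ∀ w' x, |γ w' x| ≤ Cγ) (Cφ : ℝ) (hφb : ∀ w' x, 0 < φ w' x ∧ φ w' x ≤ Cφ)
    (St : 𝒳 → ℝ) (hStm : Measurable St) (CSt : ℝ) (hStb : ∀ x, 0 < St x ∧ St x ≤ CSt)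
    (M : ℝ) (hMpos : 0 < M)
    (hSt : ∀ᵐ ω ∂P, St (X ω) ≤ M * ∏ w' ∈ Wfin, φ w' (X ω))
    (hDR : (∀ w' x, φ w' x = p w' x) ∨ (∀ w' x, γ w' x = μ w' x)) :
    P[(fun ω => St (X ω) * ((∑ w' ∈ Wfin, κ w' * (γ w' (X ω) + (if W ω = w' then (1:ℝ) else 0) * (Y ω - γ w' (X ω)) / φ w' (X ω))) - ∑ w' ∈ Wfin, κ w' * μ w' (X ω)))|sigmaAlg X] =ᵐ[P] 0 ∧
    ∃ C : ℝ, ∀ᵐ ω ∂P, (P[(fun ω' => (St (X ω') * ((∑ w' ∈ Wfin, κ w' * (γ w' (X ω') + (if W ω' = w' then (1:ℝ) else 0) * (Y ω' - γ w' (X ω')) / φ w' (X ω'))) - ∑ w' ∈ Wfin, κ w' * μ w' (X ω'))) ^ 2)|sigmaAlg X]) ω ≤ C := by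
  have hY : ∀ w ω, W ω = w → Y ω = Ys w ω := by
    rintro w ω rfl
    simp [hSUTVA ω]
  set K := M * Cφ ^ (Wfin.card - 1)
  have hK : ∀ w ∈ Wfin, ∀ᵐ ω ∂P, St (X ω) / φ w (X ω) ≤ K := fun w hw ↦
    hSt.mono fun ω hω ↦ div_le_mul_pow_of_le_mul_prod hw (fun j _ ↦ hφb j _) hMpos.le hω
  have hΨ : ∀ ω, St (X ω) * ((∑ w' ∈ Wfin, κ w' * (γ w' (X ω) + (if W ω = w' then (1:ℝ) else 0) *
      (Y ω - γ w' (X ω)) / φ w' (X ω))) - ∑ w' ∈ Wfin, κ w' * μ w' (X ω)) =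
      ∑ w ∈ Wfin, augmentedTerm X W Y St w (κ w) (γ w) (φ w) (μ w) ω := fun ω ↦ by
    simp only [augmentedTerm, treatmentIndicator, ← Finset.mul_sum, ← Finset.sum_sub_distrib]
  simp only [hΨ]
  refine ⟨condExp_finsetSum_ae_eq_zero (fun w hw ↦ integrable_augmentedTerm hX hWm (hY w)
    (hYsm w) (hYbdd w) (hγm w) (hγb w) (hμm w) (hμbdd w) hStm hStb (hφm w)
    (fun x ↦ (hφb w x).1) (hK w hw)) fun w hw ↦ ?_, _,
    ae_condExp_sq_le (B := ∑ w ∈ Wfin, (CSt * |κ w| * (Cγ + Cμ) + |κ w| * K * (CY + Cγ))) ?_⟩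
  · filter_upwards [condExp_augmentedTerm hX hWm (hY w) (hYsm w) (hYbdd w)
      (hUnconf.comp measurable_id (measurable_pi_apply w)) (hprop w) (hμc w) (hγm w) (hγb w)
      (hμm w) (hμbdd w) hStm hStb (hφm w) (fun x ↦ (hφb w x).1) (hK w hw)] with ω hω
    rw [hω]
    rcases hDR with hφp | hγμ
    · rw [← hφp, div_self (hφb w _).1.ne', sub_self, mul_zero, Pi.zero_apply]
    · rw [hγμ, sub_self, mul_zero, zero_mul, Pi.zero_apply]
  · filter_upwards [(eventually_all_finset Wfin).2 fun w hw ↦ ae_abs_augmentedTerm_le (hY w)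
      (hYbdd w) (hγb w) (hμbdd w) hStb (fun x ↦ (hφb w x).1) (hK w hw)] with ω hω
    exact (Finset.abs_sum_le_sum_abs _ _).trans (Finset.sum_le_sum hω)

theorem stmt_12
    {Ω 𝒳 𝕎 : Type*} [MeasurableSpace Ω] [StandardBorelSpace Ω] [MeasurableSpace 𝒳]
    [Fintype 𝕎] [DecidableEq 𝕎] [MeasurableSpace 𝕎] [MeasurableSingletonClass 𝕎]
    (P : Measure Ω) [IsProbabilityMeasure P]
    (X : Ω → 𝒳) (hX : Measurable X)
    (W : Ω → 𝕎) (hWm : Measurable W)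
    (Ys : 𝕎 → Ω → ℝ) (hYsm : ∀ w', Measurable (Ys w'))
    (CY : ℝ) (hYbdd : ∀ w' ω, |Ys w' ω| ≤ CY)
    (Y : Ω → ℝ)
    (hSUTVA : ∀ ω, Y ω = ∑ w' : 𝕎, (if W ω = w' then (1:ℝ) else 0) * Ys w' ω)
    (hUnconf : CondIndepFun (sigmaAlg X) hX.comap_le W (fun ω => (fun w' => Ys w' ω)) P)
    (p : 𝕎 → 𝒳 → ℝ) (hpm : ∀ w', Measurable (p w'))
    (hprop : ∀ w' : 𝕎,
      P[(fun ω => if W ω = w' then (1:ℝ) else 0)|sigmaAlg X] =ᵐ[P] (fun ω => p w' (X ω)))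
    (hoverlap : ∀ w' : 𝕎, ∀ᵐ ω ∂P, 0 < p w' (X ω))
    (μ : 𝕎 → 𝒳 → ℝ) (hμm : ∀ w', Measurable (μ w'))
    (Cμ : ℝ) (hμbdd : ∀ w' x, |μ w' x| ≤ Cμ)
    (hμc : ∀ w' : 𝕎, P[Ys w'|sigmaAlg X] =ᵐ[P] (fun ω => μ w' (X ω)))
    (Wfin : Finset 𝕎) (κ : 𝕎 → ℝ)
    (γ φ : 𝕎 → 𝒳 → ℝ) (hγm : ∀ w', Measurable (γ w')) (hφm : ∀ w', Measurable (φ w'))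
    (Cγ : ℝ) (hγb : ∀ w' x, |γ w' x| ≤ Cγ) (Cφ : ℝ) (hφb : ∀ w' x, 0 < φ w' x ∧ φ w' x ≤ Cφ)
    (St : 𝒳 → ℝ) (hStm : Measurable St) (CSt : ℝ) (hStb : ∀ x, 0 < St x ∧ St x ≤ CSt)
    (M : ℝ) (hMpos : 0 < M)
    (hSt : ∀ᵐ ω ∂P, St (X ω) ≤ M * ∏ w' ∈ Wfin, φ w' (X ω))
    (hDR : (∀ w' x, φ w' x = p w' x) ∨ (∀ w' x, γ w' x = μ w' x)) :
    P[(fun ω => St (X ω) * ((∑ w' ∈ Wfin, κ w' * (γ w' (X ω) + (if W ω = w' then (1:ℝ) else 0) * (Y ω - γ w' (X ω)) / φ w' (X ω))) - ∑ w' ∈ Wfin, κ w' * μ w' (X ω)))|sigmaAlg X] =ᵐ[P] 0 ∧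
    ∃ C : ℝ, ∀ᵐ ω ∂P, (P[(fun ω' => (St (X ω') * ((∑ w' ∈ Wfin, κ w' * (γ w' (X ω') + (if W ω' = w' then (1:ℝ) else 0) * (Y ω' - γ w' (X ω')) / φ w' (X ω'))) - ∑ w' ∈ Wfin, κ w' * μ w' (X ω'))) ^ 2)|sigmaAlg X]) ω ≤ C :=
  stmt_12_general P X hX W hWm Ys hYsm CY hYbdd Y hSUTVA hUnconf p hprop μ hμm Cμ hμbdd hμc Wfin κ γ
    φ hγm hφm Cγ hγb Cφ hφb St hStm CSt hStb M hMpos hSt hDR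
end

section
/- Within a single stratum of N ≥ 1 units, suppose the pairs (W_i, (Y*_{w,i})_{w∈𝕎}), i = 1,…,N, are mutually independent; each W_i is a 𝕎-valued treatment with P{W_i = w} = λ_w ∈ (0,1); each W_i is independent of the potential outcomes (Y*_{w,i})_{w∈𝕎}, which are integrable with E[Y*_{w,i}] = μ_w; and the observed outcome is Y_i = Y*_{W_i,i}. Fix w ∈ 𝕎 and define the leave-one-out shrinkage reciprocal R̂_i = N/(1 + Σ_{j≠i} 1{W_j = w}) and the estimator μ̃_w = (1/N)·Σ_{i=1}^N R̂_i·1{W_i = w}·Y_i. Then E[μ̃_w] − μ_w = −(1−λ_w)^N·μ_w. -/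
/-!
Write `Uᵢ = 1{Wᵢ = w}` and `Rᵢ = 1 / (1 + ∑_{j ≠ i} Uⱼ)`, so that `μ̃_w = ∑ᵢ Rᵢ Uᵢ Yᵢ` and
`Uᵢ Yᵢ = Uᵢ Y*_{w,i}`. Since `Rᵢ` is a function of the other units, it is independent of
`(Uᵢ, Y*_{w,i})`, and `Uᵢ` is independent of `Y*_{w,i}`; hence
`E[Rᵢ Uᵢ Y*_{w,i}] = E[Rᵢ Uᵢ] μ_w`. Finally, pointwise `∑ᵢ Rᵢ Uᵢ` is `1/C` summed over the `C`
treated units, i.e. the indicator that some unit receives `w`, whose probability is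
`1 - (1 - λ_w)^N`.
-/

open MeasureTheory ProbabilityTheory Finset

theorem sum_ite_div_one_add_sum_erase_ite {ι : Type*} [Fintype ι] [DecidableEq ι]
    (p : ι → Prop) [DecidablePred p] :
    ∑ i, (if p i then (1 : ℝ) else 0) / (1 + ∑ j ∈ univ.erase i, if p j then (1 : ℝ) else 0) =
      if ∃ i, p i then 1 else 0 := by
  set A := univ.filter p
  have hcount : ∀ i, p i → 1 + ∑ j ∈ univ.erase i, (if p j then (1 : ℝ) else 0) = #A := by
    intro i hi
    rw [← sum_boole, ← add_sum_erase univ _ (mem_univ i), if_pos hi]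
  calc ∑ i, (if p i then (1 : ℝ) else 0) / (1 + ∑ j ∈ univ.erase i, if p j then (1 : ℝ) else 0)
      = ∑ i ∈ A, (1 / #A : ℝ) := by
        rw [sum_filter]
        refine sum_congr rfl fun i _ => ?_
        split_ifs with hi
        · rw [hcount i hi]
        · exact zero_div _
    _ = if ∃ i, p i then 1 else 0 := by
        rw [sum_const, nsmul_eq_mul, mul_one_div]
        split_ifs with h
        · have : (#A : ℝ) ≠ 0 := by
            simpa [A, card_eq_zero, filter_eq_empty_iff] using h
          exact div_self this
        · simp [A, filter_false_of_mem, not_exists.mp h]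

theorem measurableSet_exists_eq {Ω ι 𝕎 : Type*} [MeasurableSpace Ω] [Countable ι]
    [MeasurableSpace 𝕎] [MeasurableSingletonClass 𝕎] {W : ι → Ω → 𝕎}
    (hW : ∀ i, Measurable (W i)) (w : 𝕎) : MeasurableSet {ω | ∃ i, W i ω = w} := by
  have hmeas : ∀ i, MeasurableSet {ω | W i ω = w} := fun i => hW i (measurableSet_singleton w)
  simpa only [Set.ofPred_exists] using MeasurableSet.iUnion hmeas

namespace ProbabilityTheory

section Independence

variable {Ω : Type*} [MeasurableSpace Ω]

theorem iIndepFun.indepFun_finset_of_notMem {μ : Measure Ω} {ι : Type*} {β : ι → Type*}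
    [∀ i, MeasurableSpace (β i)] {f : ∀ i, Ω → β i}
    (hf : iIndepFun f μ) (hf_meas : ∀ i, Measurable (f i)) {s : Finset ι} {i : ι} (hi : i ∉ s) :
    IndepFun (fun ω (j : s) => f j ω) (f i) μ := by
  classical
  have := hf.indepFun_finset s {i} (disjoint_singleton_right.mpr hi) hf_meas
  exact this.comp measurable_id (measurable_pi_apply ⟨i, mem_singleton_self i⟩)

theorem IndepFun.integral_mul_mul_eq {μ : Measure Ω} {X U V : Ω → ℝ}
    (hX : AEStronglyMeasurable X μ) (hU : AEStronglyMeasurable U μ)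
    (hV : AEStronglyMeasurable V μ)
    (hXUV : IndepFun X (fun ω => (U ω, V ω)) μ) (hUV : IndepFun U V μ) :
    μ[X * U * V] = μ[X * U] * μ[V] := by
  have hXU : IndepFun X U μ := hXUV.comp measurable_id measurable_fst
  have hXUV' : IndepFun X (U * V) μ := hXUV.comp measurable_id (measurable_fst.mul measurable_snd)
  rw [mul_assoc, hXUV'.integral_mul_eq_mul_integral hX (hU.mul hV),
    hUV.integral_mul_eq_mul_integral hU hV, hXU.integral_mul_eq_mul_integral hX hU, mul_assoc]

theorem iIndepFun.measureReal_exists_eq {ι 𝕎 : Type*} [Fintype ι] [MeasurableSpace 𝕎]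
    [MeasurableSingletonClass 𝕎] {P : Measure Ω} [IsProbabilityMeasure P] {W : ι → Ω → 𝕎}
    (hW : iIndepFun W P) (hW_meas : ∀ i, Measurable (W i)) {w : 𝕎} {p : ℝ}
    (hp : ∀ i, P.real {ω | W i ω = w} = p) :
    P.real {ω | ∃ i, W i ω = w} = 1 - (1 - p) ^ Fintype.card ι := by
  have hmeas : ∀ i, MeasurableSet {ω | W i ω = w} := fun i => hW_meas i (measurableSet_singleton w)
  have hcompl : {ω | ∃ i, W i ω = w}ᶜ = ⋂ i, {ω | W i ω = w}ᶜ := by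
    ext ω; simp
  have hnone : P.real (⋂ i, {ω | W i ω = w}ᶜ) = (1 - p) ^ Fintype.card ι := by
    rw [measureReal_def, hW.meas_iInter (s := fun i => {ω | W i ω = w}ᶜ)
      fun i => ⟨{w}ᶜ, (measurableSet_singleton w).compl, rfl⟩, ENNReal.toReal_prod, ← card_univ,
      ← prod_const]
    refine prod_congr rfl fun i _ => ?_
    rw [← measureReal_def, probReal_compl_eq_one_sub (hmeas i), hp i]
  rw [← hnone, ← hcompl, probReal_compl_eq_one_sub (measurableSet_exists_eq hW_meas w),
    sub_sub_cancel]

end Independence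

section LeaveOneOut

variable {Ω ι 𝕎 : Type*} [DecidableEq 𝕎] (W : ι → Ω → 𝕎) (w : 𝕎)

def treated (i : ι) (ω : Ω) : ℝ := if W i ω = w then 1 else 0

/-- `R̂ᵢ / N` in the paper's notation. -/
noncomputable def looReciprocal [Fintype ι] [DecidableEq ι] (i : ι) (ω : Ω) : ℝ :=
  (1 + ∑ j ∈ univ.erase i, treated W w j ω)⁻¹

variable {W}

theorem measurable_treated [MeasurableSpace Ω] [MeasurableSpace 𝕎] [MeasurableSingletonClass 𝕎]
    {i : ι} (hW : Measurable (W i)) : Measurable (treated W w i) :=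
  Measurable.ite (p := fun ω => W i ω = w) (hW (measurableSet_singleton w)) measurable_const
    measurable_const

variable [Fintype ι] [DecidableEq ι]

theorem norm_looReciprocal_mul_treated_le_one (i : ι) (ω : Ω) :
    ‖looReciprocal W w i ω * treated W w i ω‖ ≤ 1 := by
  have htreated : ∀ j, 0 ≤ treated W w j ω ∧ treated W w j ω ≤ 1 := fun j => by
    unfold treated; split_ifs <;> norm_num
  have hcount : 0 ≤ ∑ j ∈ univ.erase i, treated W w j ω := sum_nonneg fun j _ => (htreated j).1
  rw [norm_mul, looReciprocal, Real.norm_of_nonneg (inv_nonneg.2 (by linarith)),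
    Real.norm_of_nonneg (htreated i).1]
  exact mul_le_one₀ (inv_le_one_of_one_le₀ (by linarith)) (htreated i).1 (htreated i).2

theorem sum_looReciprocal_mul_treated (ω : Ω) :
    ∑ i, looReciprocal W w i ω * treated W w i ω = {ω | ∃ i, W i ω = w}.indicator 1 ω := by
  simp only [looReciprocal, treated, inv_mul_eq_div, sum_ite_div_one_add_sum_erase_ite,
    Set.indicator_apply, Set.mem_ofPred_eq, Pi.one_apply]

variable [MeasurableSpace Ω] [MeasurableSpace 𝕎] [MeasurableSingletonClass 𝕎] {P : Measure Ω}


theorem measurable_looReciprocal (hW : ∀ i, Measurable (W i)) (i : ι) :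
    Measurable (looReciprocal W w i) :=
  (measurable_const.add (measurable_sum _ fun j _ => measurable_treated w (hW j))).inv

theorem integrable_looReciprocal_mul_treated_mul (hW : ∀ i, Measurable (W i)) {V : Ω → ℝ}
    (hV : Integrable V P) (i : ι) :
    Integrable (fun ω => looReciprocal W w i ω * treated W w i ω * V ω) P :=
  hV.bdd_mul ((measurable_looReciprocal w hW i).mul (measurable_treated w (hW i))).aestronglyMeasurable
    (ae_of_all _ (norm_looReciprocal_mul_treated_le_one w i))

theorem sum_integral_looReciprocal_mul_treated [IsProbabilityMeasure P] (hW : iIndepFun W P)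
    (hW_meas : ∀ i, Measurable (W i)) {p : ℝ} (hp : ∀ i, P.real {ω | W i ω = w} = p) :
    ∑ i, ∫ ω, looReciprocal W w i ω * treated W w i ω ∂P = 1 - (1 - p) ^ Fintype.card ι := by
  have hint : ∀ i, Integrable (fun ω => looReciprocal W w i ω * treated W w i ω) P := fun i => by
    simpa using integrable_looReciprocal_mul_treated_mul w hW_meas (integrable_const (1 : ℝ)) i
  rw [← integral_finsetSum _ fun i _ => hint i,
    integral_congr_ae (ae_of_all _ (sum_looReciprocal_mul_treated w)),
    integral_indicator_one (measurableSet_exists_eq hW_meas w), hW.measureReal_exists_eq hW_meas hp]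

theorem integral_looReciprocal_mul_treated_mul {V : ι → Ω → ℝ} (hW : ∀ i, Measurable (W i))
    (hV : ∀ i, Measurable (V i)) (hWV : iIndepFun (fun i ω => (W i ω, V i ω)) P)
    (i : ι) (hWVi : IndepFun (W i) (V i) P) :
    ∫ ω, looReciprocal W w i ω * treated W w i ω * V i ω ∂P =
      (∫ ω, looReciprocal W w i ω * treated W w i ω ∂P) * ∫ ω, V i ω ∂P := by
  have hind : Measurable fun a : 𝕎 => if a = w then (1 : ℝ) else 0 :=
    Measurable.ite (measurableSet_singleton w) measurable_const measurable_const
  have hZ : iIndepFun (fun i ω => (treated W w i ω, V i ω)) P :=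
    hWV.comp (fun _ x => (if x.1 = w then (1 : ℝ) else 0, x.2))
      fun _ => (hind.comp measurable_fst).prodMk measurable_snd
  have hRZ : IndepFun (looReciprocal W w i) (fun ω => (treated W w i ω, V i ω)) P := by
    have := (hZ.indepFun_finset_of_notMem (fun j => (measurable_treated w (hW j)).prodMk (hV j))
      (notMem_erase i univ)).comp (φ := fun v => (1 + ∑ j, (v j).1)⁻¹) (by fun_prop) measurable_id
    convert this using 1
    · funext ω
      simp only [looReciprocal, Function.comp_apply, sum_coe_sort (univ.erase i) (treated W w · ω)]
    · rfl
  exact IndepFun.integral_mul_mul_eq (measurable_looReciprocal w hW i).aestronglyMeasurable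
    (measurable_treated w (hW i)).aestronglyMeasurable (hV i).aestronglyMeasurable hRZ
    (hWVi.comp hind measurable_id)

end LeaveOneOut

end ProbabilityTheory

theorem stmt_15_general
    {Ω 𝕎 : Type*} [MeasurableSpace Ω] [DecidableEq 𝕎]
    [MeasurableSpace 𝕎] [MeasurableSingletonClass 𝕎]
    (P : Measure Ω) [IsProbabilityMeasure P]
    (N : ℕ) (hN : 1 ≤ N)
    (W : Fin N → Ω → 𝕎) (hWm : ∀ i, Measurable (W i))
    (Ys : 𝕎 → Fin N → Ω → ℝ) (hYsm : ∀ w' i, Measurable (Ys w' i))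
    (hYsint : ∀ w' i, Integrable (Ys w' i) P)
    (hindep : iIndepFun (m := fun _ : Fin N => (inferInstance : MeasurableSpace (𝕎 × (𝕎 → ℝ))))
      (fun i => (fun ω => (W i ω, fun w' => Ys w' i ω))) P)
    (hWY : ∀ i, IndepFun (W i) (fun ω => (fun w' => Ys w' i ω)) P)
    (lam : 𝕎 → ℝ) (hlam : ∀ w', lam w' ∈ Set.Ioo (0:ℝ) 1)
    (hlaw : ∀ i w', P {ω | W i ω = w'} = ENNReal.ofReal (lam w'))
    (muw : 𝕎 → ℝ) (hmu : ∀ w' i, ∫ ω, Ys w' i ω ∂P = muw w')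
    (Y : Fin N → Ω → ℝ) (hY : ∀ i ω, Y i ω = Ys (W i ω) i ω)
    (w : 𝕎) :
    (∫ ω, (1 / (N : ℝ)) * ∑ i : Fin N, ((N : ℝ) / (1 + ∑ j ∈ Finset.univ.erase i, (if W j ω = w then (1:ℝ) else 0))) * (if W i ω = w then (1:ℝ) else 0) * Y i ω ∂P) - muw w = -(1 - lam w) ^ N * muw w := by
  have hN0 : (N : ℝ) ≠ 0 := Nat.cast_ne_zero.2 (by omega)
  have hintegrand : ∀ ω, (1 / (N : ℝ)) * ∑ i : Fin N, ((N : ℝ) / (1 + ∑ j ∈ Finset.univ.erase i,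
      (if W j ω = w then (1:ℝ) else 0))) * (if W i ω = w then (1:ℝ) else 0) * Y i ω =
      ∑ i, looReciprocal W w i ω * treated W w i ω * Ys w i ω := fun ω => by
    rw [mul_sum]
    refine sum_congr rfl fun i _ => ?_
    simp only [looReciprocal, treated, hY]
    split_ifs with h
    · rw [h]
      field_simp
    · simp
  have hWYs : iIndepFun (fun i ω => (W i ω, Ys w i ω)) P :=
    hindep.comp (fun _ x => (x.1, x.2 w)) fun _ =>
      measurable_fst.prodMk ((measurable_pi_apply w).comp measurable_snd)
  have hW : iIndepFun W P := hindep.comp (fun _ => Prod.fst) fun _ => measurable_fst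
  have hlawReal : ∀ i, P.real {ω | W i ω = w} = lam w := fun i => by
    rw [measureReal_def, hlaw, ENNReal.toReal_ofReal (hlam w).1.le]
  rw [integral_congr_ae (ae_of_all _ hintegrand),
    integral_finsetSum _ fun i _ => integrable_looReciprocal_mul_treated_mul w hWm (hYsint w i) i]
  simp only [fun i => integral_looReciprocal_mul_treated_mul w hWm (hYsm w) hWYs i
    ((hWY i).comp measurable_id (measurable_pi_apply w)), hmu, ← sum_mul]
  rw [sum_integral_looReciprocal_mul_treated w hW hWm hlawReal, Fintype.card_fin]
  ring

theorem stmt_15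
    {Ω 𝕎 : Type*} [MeasurableSpace Ω] [Fintype 𝕎] [DecidableEq 𝕎]
    [MeasurableSpace 𝕎] [MeasurableSingletonClass 𝕎]
    (P : Measure Ω) [IsProbabilityMeasure P]
    (N : ℕ) (hN : 1 ≤ N)
    (W : Fin N → Ω → 𝕎) (hWm : ∀ i, Measurable (W i))
    (Ys : 𝕎 → Fin N → Ω → ℝ) (hYsm : ∀ w' i, Measurable (Ys w' i))
    (hYsint : ∀ w' i, Integrable (Ys w' i) P)
    (hindep : iIndepFun (m := fun _ : Fin N => (inferInstance : MeasurableSpace (𝕎 × (𝕎 → ℝ))))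
      (fun i => (fun ω => (W i ω, fun w' => Ys w' i ω))) P)
    (hWY : ∀ i, IndepFun (W i) (fun ω => (fun w' => Ys w' i ω)) P)
    (lam : 𝕎 → ℝ) (hlam : ∀ w', lam w' ∈ Set.Ioo (0:ℝ) 1)
    (hlaw : ∀ i w', P {ω | W i ω = w'} = ENNReal.ofReal (lam w'))
    (muw : 𝕎 → ℝ) (hmu : ∀ w' i, ∫ ω, Ys w' i ω ∂P = muw w')
    (Y : Fin N → Ω → ℝ) (hY : ∀ i ω, Y i ω = Ys (W i ω) i ω)
    (w : 𝕎) :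
    (∫ ω, (1 / (N : ℝ)) * ∑ i : Fin N, ((N : ℝ) / (1 + ∑ j ∈ Finset.univ.erase i, (if W j ω = w then (1:ℝ) else 0))) * (if W i ω = w then (1:ℝ) else 0) * Y i ω ∂P) - muw w = -(1 - lam w) ^ N * muw w :=
  stmt_15_general P N hN W hWm Ys hYsm hYsint hindep hWY lam hlam hlaw muw hmu Y hY w
end

section
/- In the single-stratum model of N ≥ 1 independent units with P{W_i = w} = λ_w ∈ (0,1), E[Y*_{w,i}] = μ_w ∈ [C̲_w, C̄_w], and Y_i = Y*_{W_i,i}: define μ̂_w(t) = μ̃_w + t·∏_{i=1}^N 1{W_i ≠ w}, where μ̃_w = (1/N)·Σ_{i=1}^N (N/(1 + Σ_{j≠i} 1{W_j = w}))·1{W_i = w}·Y_i. Then E[μ̂_w(μ_w)] = μ_w, and consequently E[μ̂_w(C̲_w)] ≤ μ_w ≤ E[μ̂_w(C̄_w)]; that is, the interval [μ̂_w(C̲_w), μ̂_w(C̄_w)] is an unbiased set-estimator of μ_w. -/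
/-!
Write `A_i = 1{W_i = w}` and `S_{-i} = ∑_{j ≠ i} A_j`. The weight `(1 + S_{-i})⁻¹` is a function
of the other units only, so by mutual independence and `W_i ⟂ Y*_{w,i}` each term satisfies
`E[(1 + S_{-i})⁻¹ A_i Y*_{w,i}] = μ_w E[(1 + S_{-i})⁻¹ A_i]`. On the event that some unit receives
`w`, the weights `(1 + S_{-i})⁻¹ A_i` sum to exactly `1`; otherwise they all vanish. Hence
`E[μ̃_w] = μ_w (1 - q)` with `q = P(no unit receives w)`, and `E[μ̂_w(t)] = μ_w + (t - μ_w) q`,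
which is monotone in `t` since `q ≥ 0`.
-/

open MeasureTheory ProbabilityTheory Finset

theorem sum_inv_one_add_sum_erase_mul_ite {ι : Type*} [Fintype ι] [DecidableEq ι]
    (p : ι → Prop) [DecidablePred p] :
    ∑ i, (1 + ∑ j ∈ univ.erase i, if p j then (1 : ℝ) else 0)⁻¹ * (if p i then 1 else 0)
      = 1 - ∏ i, if p i then (0 : ℝ) else 1 := by
  by_cases hp : ∃ i, p i
  · obtain ⟨i₀, hi₀⟩ := hp
    have hS : 1 ≤ ∑ j, if p j then (1 : ℝ) else 0 :=
      calc (1 : ℝ) = if p i₀ then 1 else 0 := (if_pos hi₀).symm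
        _ ≤ _ := single_le_sum (f := fun j => if p j then (1 : ℝ) else 0)
          (fun j _ => by split_ifs <;> norm_num) (mem_univ i₀)
    -- the denominator of a unit with `p i` counts that unit itself
    have hterm : ∀ i, (1 + ∑ j ∈ univ.erase i, if p j then (1 : ℝ) else 0)⁻¹ *
        (if p i then 1 else 0) = (∑ j, if p j then (1 : ℝ) else 0)⁻¹ * (if p i then 1 else 0) := by
      intro i
      by_cases hi : p i
      · rw [← add_sum_erase univ (fun j => if p j then (1 : ℝ) else 0) (mem_univ i), if_pos hi]
      · simp [hi]
    rw [sum_congr rfl fun i _ => hterm i, ← mul_sum, inv_mul_cancel₀ (by positivity),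
      prod_eq_zero (f := fun i => if p i then (0 : ℝ) else 1) (mem_univ i₀) (if_pos hi₀), sub_zero]
  · push Not at hp
    simp [hp]

theorem norm_inv_one_add_sum_mul_ite_le_one {ι : Type*} (s : Finset ι) (q : ι → Prop)
    [DecidablePred q] (b : Prop) [Decidable b] :
    ‖(1 + ∑ j ∈ s, if q j then (1 : ℝ) else 0)⁻¹ * (if b then 1 else 0)‖ ≤ 1 := by
  have hS : 0 ≤ ∑ j ∈ s, if q j then (1 : ℝ) else 0 :=
    sum_nonneg fun j _ => by split_ifs <;> norm_num
  split_ifs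
  · rw [mul_one, norm_inv, Real.norm_of_nonneg (by linarith)]
    exact inv_le_one_of_one_le₀ (by linarith)
  · simp

section Independence

variable {Ω : Type*} [MeasurableSpace Ω] {P : Measure Ω}

theorem integral_mul_mul_eq_of_indepFun {A B G : Ω → ℝ}
    (hABG : IndepFun (fun ω => (A ω, B ω)) G P) (hAB : IndepFun A B P)
    (hA : AEStronglyMeasurable A P) (hB : AEStronglyMeasurable B P)
    (hG : AEStronglyMeasurable G P) :
    ∫ ω, G ω * A ω * B ω ∂P = (∫ ω, B ω ∂P) * ∫ ω, G ω * A ω ∂P := by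
  have hG_AB : IndepFun G (fun ω => A ω * B ω) P :=
    hABG.symm.comp measurable_id (measurable_fst.mul measurable_snd)
  have hG_A : IndepFun G A P := hABG.symm.comp measurable_id measurable_fst
  simp_rw [mul_assoc]
  rw [hG_AB.integral_fun_mul_eq_mul_integral hG (hA.mul hB),
    hAB.integral_fun_mul_eq_mul_integral hA hB, hG_A.integral_fun_mul_eq_mul_integral hG hA]
  ring

theorem integral_inv_one_add_sum_erase_mul_mul {ι : Type*} [Fintype ι] [DecidableEq ι]
    {A B : ι → Ω → ℝ} (hind : iIndepFun (fun i ω => (A i ω, B i ω)) P)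
    (hA : ∀ i, AEMeasurable (A i) P) (hB : ∀ i, AEMeasurable (B i) P)
    {i : ι} (hABi : IndepFun (A i) (B i) P) :
    ∫ ω, (1 + ∑ j ∈ univ.erase i, A j ω)⁻¹ * A i ω * B i ω ∂P
      = (∫ ω, B i ω ∂P) * ∫ ω, (1 + ∑ j ∈ univ.erase i, A j ω)⁻¹ * A i ω ∂P := by
  have hrest := hind.indepFun_finsetSum_of_notMem₀ (fun j => (hA j).prodMk (hB j))
    (notMem_erase i univ)
  have hG : IndepFun (fun ω => (A i ω, B i ω))
      (fun ω => (1 + ∑ j ∈ univ.erase i, A j ω)⁻¹) P := by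
    convert hrest.symm.comp measurable_id ((measurable_const.add measurable_fst).inv)
      (φ := id) (ψ := fun x : ℝ × ℝ => (1 + x.1)⁻¹) using 1
    · rfl
    · ext ω
      simp [Finset.sum_apply, Prod.fst_sum]
  exact integral_mul_mul_eq_of_indepFun hG hABi (hA i).aestronglyMeasurable
    (hB i).aestronglyMeasurable (by fun_prop)

variable {ι : Type*} [Fintype ι] {p : ι → Ω → Prop} [∀ i ω, Decidable (p i ω)]
  {B : ι → Ω → ℝ}

theorem integrable_prod_ite [IsFiniteMeasure P] (hp : ∀ i, MeasurableSet {ω | p i ω}) :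
    Integrable (fun ω => ∏ i, if p i ω then (0 : ℝ) else 1) P := by
  refine .of_bound (Finset.measurable_prod _ fun i _ =>
    measurable_const.ite (hp i) measurable_const).aestronglyMeasurable 1 (ae_of_all _ fun ω => ?_)
  rw [norm_prod]
  exact prod_le_one (fun _ _ => norm_nonneg _) fun i _ => by split_ifs <;> norm_num

variable [DecidableEq ι]

theorem measurable_inv_one_add_sum_erase_mul_ite (hp : ∀ i, MeasurableSet {ω | p i ω}) (i : ι) :
    Measurable fun ω =>
      (1 + ∑ j ∈ univ.erase i, if p j ω then (1 : ℝ) else 0)⁻¹ * (if p i ω then 1 else 0) := by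
  have hind : ∀ j, Measurable fun ω => if p j ω then (1 : ℝ) else 0 :=
    fun j => measurable_const.ite (hp j) measurable_const
  fun_prop

theorem integrable_inv_one_add_sum_erase_mul_ite_mul (hp : ∀ i, MeasurableSet {ω | p i ω})
    (hB : ∀ i, Integrable (B i) P) (i : ι) :
    Integrable (fun ω =>
      (1 + ∑ j ∈ univ.erase i, if p j ω then (1 : ℝ) else 0)⁻¹ * (if p i ω then 1 else 0) *
        B i ω) P :=
  (hB i).bdd_mul (measurable_inv_one_add_sum_erase_mul_ite hp i).aestronglyMeasurable
    (ae_of_all _ fun _ => norm_inv_one_add_sum_mul_ite_le_one _ _ _)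

theorem integral_sum_inv_one_add_sum_erase_mul_ite_mul [IsProbabilityMeasure P] {m : ℝ}
    (hp : ∀ i, MeasurableSet {ω | p i ω}) (hB : ∀ i, Integrable (B i) P)
    (hBm : ∀ i, ∫ ω, B i ω ∂P = m)
    (hind : iIndepFun (fun i ω => ((if p i ω then (1 : ℝ) else 0), B i ω)) P)
    (hpB : ∀ i, IndepFun (fun ω => if p i ω then (1 : ℝ) else 0) (B i) P) :
    ∫ ω, ∑ i, (1 + ∑ j ∈ univ.erase i, if p j ω then (1 : ℝ) else 0)⁻¹ *
        (if p i ω then 1 else 0) * B i ω ∂P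
      = m * (1 - ∫ ω, ∏ i, (if p i ω then (0 : ℝ) else 1) ∂P) := by
  calc _ = ∑ i, ∫ ω, (1 + ∑ j ∈ univ.erase i, if p j ω then (1 : ℝ) else 0)⁻¹ *
          (if p i ω then 1 else 0) * B i ω ∂P :=
        integral_finsetSum _ fun i _ => integrable_inv_one_add_sum_erase_mul_ite_mul hp hB i
    _ = ∑ i, m * ∫ ω, (1 + ∑ j ∈ univ.erase i, if p j ω then (1 : ℝ) else 0)⁻¹ *
          (if p i ω then 1 else 0) ∂P := by
        refine sum_congr rfl fun i _ => ?_
        rw [← hBm i]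
        exact integral_inv_one_add_sum_erase_mul_mul hind
          (fun j => (measurable_const.ite (hp j) measurable_const).aemeasurable)
          (fun j => (hB j).aemeasurable) (hpB i)
    _ = m * ∫ ω, ∑ i, (1 + ∑ j ∈ univ.erase i, if p j ω then (1 : ℝ) else 0)⁻¹ *
          (if p i ω then 1 else 0) ∂P := by
        rw [← mul_sum, integral_finsetSum _ fun i _ => ?_]
        exact (integrable_const 1).mono'
          (measurable_inv_one_add_sum_erase_mul_ite hp i).aestronglyMeasurable
          (ae_of_all _ fun _ => norm_inv_one_add_sum_mul_ite_le_one _ _ _)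
    _ = m * (1 - ∫ ω, ∏ i, (if p i ω then (0 : ℝ) else 1) ∂P) := by
        simp_rw [sum_inv_one_add_sum_erase_mul_ite]
        rw [integral_sub (integrable_const 1) (integrable_prod_ite hp)]
        simp

end Independence

section Estimator

variable {Ω 𝕎 : Type*} [DecidableEq 𝕎] {N : ℕ}

noncomputable def muHat (W : Fin N → Ω → 𝕎) (Y : Fin N → Ω → ℝ) (w : 𝕎) (t : ℝ) (ω : Ω) : ℝ :=
  (1 / (N : ℝ)) * ∑ i : Fin N, ((N : ℝ) / (1 + ∑ j ∈ univ.erase i,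
      (if W j ω = w then (1 : ℝ) else 0))) * (if W i ω = w then (1 : ℝ) else 0) * Y i ω +
    t * ∏ i : Fin N, (if W i ω = w then (0 : ℝ) else 1)

theorem one_div_mul_sum_natCast_div_mul_mul (d a b : Fin N → ℝ) :
    (1 / (N : ℝ)) * ∑ i, (N : ℝ) / d i * a i * b i = ∑ i, (d i)⁻¹ * a i * b i := by
  rw [mul_sum]
  refine sum_congr rfl fun i _ => ?_
  have : (N : ℝ) ≠ 0 := Nat.cast_ne_zero.2 (Fin.pos i).ne'
  field_simp

theorem muHat_eq {W : Fin N → Ω → 𝕎} {Y B : Fin N → Ω → ℝ} {w : 𝕎}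
    (hY : ∀ i ω, W i ω = w → Y i ω = B i ω) (t : ℝ) (ω : Ω) :
    muHat W Y w t ω = ∑ i, (1 + ∑ j ∈ univ.erase i, if W j ω = w then (1 : ℝ) else 0)⁻¹ *
        (if W i ω = w then 1 else 0) * B i ω + t * ∏ i, (if W i ω = w then (0 : ℝ) else 1) := by
  rw [muHat, one_div_mul_sum_natCast_div_mul_mul]
  congr 1
  refine sum_congr rfl fun i _ => ?_
  by_cases h : W i ω = w
  · rw [hY i ω h]
  · simp [h]

theorem integral_muHat [MeasurableSpace Ω] [MeasurableSpace 𝕎] [MeasurableSingletonClass 𝕎]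
    {P : Measure Ω} [IsProbabilityMeasure P] {W : Fin N → Ω → 𝕎} {Y B : Fin N → Ω → ℝ} {w : 𝕎}
    {m : ℝ}
    (hW : ∀ i, Measurable (W i)) (hB : ∀ i, Integrable (B i) P)
    (hBm : ∀ i, ∫ ω, B i ω ∂P = m)
    (hind : iIndepFun (fun i ω => (W i ω, B i ω)) P) (hWB : ∀ i, IndepFun (W i) (B i) P)
    (hY : ∀ i ω, W i ω = w → Y i ω = B i ω) (t : ℝ) :
    ∫ ω, muHat W Y w t ω ∂P = m + (t - m) * ∫ ω, ∏ i, (if W i ω = w then (0 : ℝ) else 1) ∂P := by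
  have hp : ∀ i, MeasurableSet {ω | W i ω = w} := fun i => hW i (measurableSet_singleton w)
  have hindicator : Measurable fun x : 𝕎 => if x = w then (1 : ℝ) else 0 :=
    measurable_const.ite (measurableSet_singleton w) measurable_const
  simp_rw [muHat_eq hY]
  rw [integral_add (integrable_finsetSum _ fun i _ =>
      integrable_inv_one_add_sum_erase_mul_ite_mul hp hB i)
      ((integrable_prod_ite hp).const_mul t), integral_const_mul,
    integral_sum_inv_one_add_sum_erase_mul_ite_mul hp hB hBm
      (hind.comp _ fun _ => hindicator.prodMap measurable_id)
      (fun i => (hWB i).comp hindicator measurable_id)]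
  ring

end Estimator

theorem stmt_16_general
    {Ω 𝕎 : Type*} [MeasurableSpace Ω] [DecidableEq 𝕎]
    [MeasurableSpace 𝕎] [MeasurableSingletonClass 𝕎]
    (P : Measure Ω) [IsProbabilityMeasure P]
    (N : ℕ)
    (W : Fin N → Ω → 𝕎) (hWm : ∀ i, Measurable (W i))
    (Ys : 𝕎 → Fin N → Ω → ℝ)
    (hYsint : ∀ w' i, Integrable (Ys w' i) P)
    (hindep : iIndepFun (m := fun _ : Fin N => (inferInstance : MeasurableSpace (𝕎 × (𝕎 → ℝ))))
      (fun i => (fun ω => (W i ω, fun w' => Ys w' i ω))) P)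
    (hWY : ∀ i, IndepFun (W i) (fun ω => (fun w' => Ys w' i ω)) P)
    (muw : 𝕎 → ℝ) (hmu : ∀ w' i, ∫ ω, Ys w' i ω ∂P = muw w')
    (Y : Fin N → Ω → ℝ) (hY : ∀ i ω, Y i ω = Ys (W i ω) i ω)
    (w : 𝕎) (Cl Cu : ℝ) (hmuIcc : muw w ∈ Set.Icc Cl Cu) :
    (∫ ω, ((1 / (N : ℝ)) * ∑ i : Fin N, ((N : ℝ) / (1 + ∑ j ∈ Finset.univ.erase i, (if W j ω = w then (1:ℝ) else 0))) * (if W i ω = w then (1:ℝ) else 0) * Y i ω) + muw w * ∏ i : Fin N, (if W i ω = w then (0:ℝ) else 1) ∂P) = muw w ∧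
    (∫ ω, ((1 / (N : ℝ)) * ∑ i : Fin N, ((N : ℝ) / (1 + ∑ j ∈ Finset.univ.erase i, (if W j ω = w then (1:ℝ) else 0))) * (if W i ω = w then (1:ℝ) else 0) * Y i ω) + Cl * ∏ i : Fin N, (if W i ω = w then (0:ℝ) else 1) ∂P) ≤ muw w ∧
    muw w ≤ (∫ ω, ((1 / (N : ℝ)) * ∑ i : Fin N, ((N : ℝ) / (1 + ∑ j ∈ Finset.univ.erase i, (if W j ω = w then (1:ℝ) else 0))) * (if W i ω = w then (1:ℝ) else 0) * Y i ω) + Cu * ∏ i : Fin N, (if W i ω = w then (0:ℝ) else 1) ∂P) := by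
  have hind : iIndepFun (fun i ω => (W i ω, Ys w i ω)) P :=
    hindep.comp (fun _ x => (x.1, x.2 w)) fun _ =>
      measurable_fst.prodMk ((measurable_pi_apply w).comp measurable_snd)
  have hWB : ∀ i, IndepFun (W i) (Ys w i) P :=
    fun i => (hWY i).comp measurable_id (measurable_pi_apply w)
  have hmean := integral_muHat (P := P) (Y := Y) hWm (hYsint w) (hmu w) hind hWB
    fun i ω h => by rw [hY, h]
  have hempty : 0 ≤ ∫ ω, ∏ i, (if W i ω = w then (0 : ℝ) else 1) ∂P :=
    integral_nonneg fun ω => prod_nonneg fun i _ => by split_ifs <;> norm_num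
  obtain ⟨hCl, hCu⟩ := hmuIcc
  exact ⟨(hmean _).trans (by ring), (hmean Cl).trans_le (by nlinarith),
    le_of_le_of_eq (by nlinarith) (hmean Cu).symm⟩

theorem stmt_16
    {Ω 𝕎 : Type*} [MeasurableSpace Ω] [Fintype 𝕎] [DecidableEq 𝕎]
    [MeasurableSpace 𝕎] [MeasurableSingletonClass 𝕎]
    (P : Measure Ω) [IsProbabilityMeasure P]
    (N : ℕ) (hN : 1 ≤ N)
    (W : Fin N → Ω → 𝕎) (hWm : ∀ i, Measurable (W i))
    (Ys : 𝕎 → Fin N → Ω → ℝ) (hYsm : ∀ w' i, Measurable (Ys w' i))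
    (hYsint : ∀ w' i, Integrable (Ys w' i) P)
    (hindep : iIndepFun (m := fun _ : Fin N => (inferInstance : MeasurableSpace (𝕎 × (𝕎 → ℝ))))
      (fun i => (fun ω => (W i ω, fun w' => Ys w' i ω))) P)
    (hWY : ∀ i, IndepFun (W i) (fun ω => (fun w' => Ys w' i ω)) P)
    (lam : 𝕎 → ℝ) (hlam : ∀ w', lam w' ∈ Set.Ioo (0:ℝ) 1)
    (hlaw : ∀ i w', P {ω | W i ω = w'} = ENNReal.ofReal (lam w'))
    (muw : 𝕎 → ℝ) (hmu : ∀ w' i, ∫ ω, Ys w' i ω ∂P = muw w')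
    (Y : Fin N → Ω → ℝ) (hY : ∀ i ω, Y i ω = Ys (W i ω) i ω)
    (w : 𝕎) (Cl Cu : ℝ) (hmuIcc : muw w ∈ Set.Icc Cl Cu) :
    (∫ ω, ((1 / (N : ℝ)) * ∑ i : Fin N, ((N : ℝ) / (1 + ∑ j ∈ Finset.univ.erase i, (if W j ω = w then (1:ℝ) else 0))) * (if W i ω = w then (1:ℝ) else 0) * Y i ω) + muw w * ∏ i : Fin N, (if W i ω = w then (0:ℝ) else 1) ∂P) = muw w ∧
    (∫ ω, ((1 / (N : ℝ)) * ∑ i : Fin N, ((N : ℝ) / (1 + ∑ j ∈ Finset.univ.erase i, (if W j ω = w then (1:ℝ) else 0))) * (if W i ω = w then (1:ℝ) else 0) * Y i ω) + Cl * ∏ i : Fin N, (if W i ω = w then (0:ℝ) else 1) ∂P) ≤ muw w ∧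
    muw w ≤ (∫ ω, ((1 / (N : ℝ)) * ∑ i : Fin N, ((N : ℝ) / (1 + ∑ j ∈ Finset.univ.erase i, (if W j ω = w then (1:ℝ) else 0))) * (if W i ω = w then (1:ℝ) else 0) * Y i ω) + Cu * ∏ i : Fin N, (if W i ω = w then (0:ℝ) else 1) ∂P) :=
  stmt_16_general P N W hWm Ys hYsint hindep hWY muw hmu Y hY w Cl Cu hmuIcc
end

section
/- In the stratified model with strata 𝕏_n, each stratum k having N_k ≥ 2 units, all units mutually independent, P{W_i = w} = λ_{w,X_i} ∈ (0,1), E[Y*_{w,i}] = μ_w, and Y_i = Y*_{W_i,i}: fix distinct treatments a, b ∈ 𝕎 and define the leave-one-out propensity estimates P̂_{w,i} = (Σ_{j≠i: X_j = X_i} 1{W_j = w})/(N_{X_i} − 1) and the statistic T̂_{a,b} = (1/n)·Σ_{i=1}^n [P̂_{b,i}·1{W_i = a} − P̂_{a,i}·1{W_i = b}]·Y_i. Then E[T̂_{a,b}] = 𝒢_{a,b}·(μ_a − μ_b), where 𝒢_{a,b} = (1/n)·Σ_{i=1}^n λ_{a,X_i}·λ_{b,X_i}; equivalently, the residual Ψ̂_{a,b}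 = 𝒢_{a,b}·(μ_a − μ_b) − T̂_{a,b} satisfies E[Ψ̂_{a,b}] = 0. -/
open MeasureTheory ProbabilityTheory Finset

/-- The set of units belonging to stratum `k`. -/
def stratum {n K : ℕ} (Xs : Fin n → Fin K) (k : Fin K) : Finset (Fin n) :=
  Finset.univ.filter (fun i => Xs i = k)

/-- The number of units in stratum `k`. -/
def Nstr {n K : ℕ} (Xs : Fin n → Fin K) (k : Fin K) : ℕ := (stratum Xs k).card

/-- Leave-one-out shrinkage estimator of the reciprocal of the propensity score. -/
noncomputable def Rhat {Ω 𝕎 : Type*} [DecidableEq 𝕎] {n K : ℕ} (Xs : Fin n → Fin K)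
    (W : Fin n → Ω → 𝕎) (w : 𝕎) (i : Fin n) (ω : Ω) : ℝ :=
  (Nstr Xs (Xs i) : ℝ) /
    (1 + ∑ j ∈ (stratum Xs (Xs i)).erase i, (if W j ω = w then (1:ℝ) else 0))

/-- Leave-one-out estimator of the propensity score. -/
noncomputable def Phat {Ω 𝕎 : Type*} [DecidableEq 𝕎] {n K : ℕ} (Xs : Fin n → Fin K)
    (W : Fin n → Ω → 𝕎) (w : 𝕎) (i : Fin n) (ω : Ω) : ℝ :=
  (∑ j ∈ (stratum Xs (Xs i)).erase i, (if W j ω = w then (1:ℝ) else 0)) /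
    ((Nstr Xs (Xs i) : ℝ) - 1)

/-- The statistic `T̂_{a,b}`. -/
noncomputable def Tstat {Ω 𝕎 : Type*} [DecidableEq 𝕎] {n K : ℕ} (Xs : Fin n → Fin K)
    (W : Fin n → Ω → 𝕎) (Y : Fin n → Ω → ℝ) (a b : 𝕎) (ω : Ω) : ℝ :=
  (1 / (n : ℝ)) * ∑ i : Fin n,
    (Phat Xs W b i ω * (if W i ω = a then (1:ℝ) else 0)
      - Phat Xs W a i ω * (if W i ω = b then (1:ℝ) else 0)) * Y i ω

/-!
On the event `{W_i = a}` we have `Y_i = Y*_{a,i}`, so the `i`-th summand of `T̂_{a,b}` is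
`1 / (N_{X_i} - 1)` times a sum over the other units `j` of stratum `X_i` of
`1{W_j = b} 1{W_i = a} Y*_{a,i} - 1{W_j = a} 1{W_i = b} Y*_{b,i}`. Unit `j ≠ i` is independent of
unit `i`, and `W_i` is independent of the potential outcomes of unit `i`, so the first term has
mean `λ_{b,X_i} λ_{a,X_i} μ_a` and the second `λ_{a,X_i} λ_{b,X_i} μ_b`. The `N_{X_i} - 1` equal
means cancel the leave-one-out normalisation.
-/

section TreatmentIndicator

variable {Ω 𝕎 : Type*} [MeasurableSpace Ω] [DecidableEq 𝕎] [MeasurableSpace 𝕎]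
  [MeasurableSingletonClass 𝕎] {P : Measure Ω} {W : Ω → 𝕎}

lemma measurable_ite_eq_one_zero (w : 𝕎) :
    Measurable (fun x : 𝕎 => if x = w then (1 : ℝ) else 0) :=
  measurable_const.ite (measurableSet_singleton w) measurable_const

lemma integral_ite_eq_of_measure_eq (hW : Measurable W) {w : 𝕎} {p : ℝ} (hp : 0 ≤ p)
    (hlaw : P {ω | W ω = w} = ENNReal.ofReal p) :
    ∫ ω, (if W ω = w then (1 : ℝ) else 0) ∂P = p := by
  have hind : (fun ω => if W ω = w then (1 : ℝ) else 0) = (W ⁻¹' {w}).indicator 1 := by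
    ext ω
    by_cases h : W ω = w <;> simp [h]
  rw [hind, integral_indicator_one (hW (measurableSet_singleton w)), measureReal_def]
  change (P {ω | W ω = w}).toReal = p
  rw [hlaw, ENNReal.toReal_ofReal hp]

lemma MeasureTheory.Integrable.ite_mul (hW : Measurable W) (w : 𝕎) {Z : Ω → ℝ}
    (hZ : Integrable Z P) :
    Integrable (fun ω => (if W ω = w then (1 : ℝ) else 0) * Z ω) P := by
  refine hZ.bdd_mul (c := 1) ((measurable_ite_eq_one_zero w).comp hW).aestronglyMeasurable ?_
  filter_upwards with ω
  split_ifs <;> simp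

lemma ProbabilityTheory.IndepFun.integral_ite_mul (hW : Measurable W) (w : 𝕎) {Z : Ω → ℝ}
    (hWZ : IndepFun W Z P) (hZ : AEStronglyMeasurable Z P) :
    ∫ ω, (if W ω = w then (1 : ℝ) else 0) * Z ω ∂P
      = (∫ ω, (if W ω = w then (1 : ℝ) else 0) ∂P) * ∫ ω, Z ω ∂P :=
  (hWZ.comp (measurable_ite_eq_one_zero w) measurable_id).integral_fun_mul_eq_mul_integral
    ((measurable_ite_eq_one_zero w).comp hW).aestronglyMeasurable hZ

lemma integral_ite_mul_apply_of_indepFun {Y : 𝕎 → Ω → ℝ} (hW : Measurable W)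
    (hWY : IndepFun W (fun ω w => Y w ω) P) {d : 𝕎} (hY : Integrable (Y d) P) {p : ℝ}
    (hp : 0 ≤ p) (hlaw : P {ω | W ω = d} = ENNReal.ofReal p) :
    ∫ ω, (if W ω = d then (1 : ℝ) else 0) * Y d ω ∂P = p * ∫ ω, Y d ω ∂P := by
  have hWYd : IndepFun W (Y d) P := hWY.comp measurable_id (measurable_pi_apply d)
  rw [hWYd.integral_ite_mul hW d hY.aestronglyMeasurable,
    integral_ite_eq_of_measure_eq hW hp hlaw]

end TreatmentIndicator

section StratifiedModel

variable {Ω 𝕎 : Type*} [DecidableEq 𝕎] {n K : ℕ} {Xs : Fin n → Fin K}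
  {W : Fin n → Ω → 𝕎} {Ys : 𝕎 → Fin n → Ω → ℝ}

noncomputable def looContrast (Xs : Fin n → Fin K) (W : Fin n → Ω → 𝕎)
    (Ys : 𝕎 → Fin n → Ω → ℝ) (a b : 𝕎) (i : Fin n) (ω : Ω) : ℝ :=
  ∑ j ∈ (stratum Xs (Xs i)).erase i,
    ((if W j ω = b then (1 : ℝ) else 0) * ((if W i ω = a then (1 : ℝ) else 0) * Ys a i ω)
      - (if W j ω = a then (1 : ℝ) else 0) * ((if W i ω = b then (1 : ℝ) else 0) * Ys b i ω))

lemma Tstat_eq_sum_looContrast {Y : Fin n → Ω → ℝ} (hY : ∀ i ω, Y i ω = Ys (W i ω) i ω)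
    (a b : 𝕎) (ω : Ω) :
    Tstat Xs W Y a b ω
      = (1 / (n : ℝ)) * ∑ i, looContrast Xs W Ys a b i ω / ((Nstr Xs (Xs i) : ℝ) - 1) := by
  have hYa : ∀ i (w : 𝕎), (if W i ω = w then (1 : ℝ) else 0) * Y i ω
      = (if W i ω = w then (1 : ℝ) else 0) * Ys w i ω := by
    intro i w
    split_ifs with h <;> simp [hY, h]
  unfold Tstat Phat looContrast
  congr 1
  refine sum_congr rfl fun i _ => ?_
  simp only [sum_sub_distrib, ← sum_mul]
  rw [sub_mul, mul_assoc, mul_assoc, hYa, hYa]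
  ring

lemma stratum_card_erase_self (i : Fin n) :
    (((stratum Xs (Xs i)).erase i).card : ℝ) = (Nstr Xs (Xs i) : ℝ) - 1 := by
  have hi : i ∈ stratum Xs (Xs i) := by simp [stratum]
  rw [card_erase_of_mem hi, Nat.cast_sub (card_pos.2 ⟨i, hi⟩), Nat.cast_one, Nstr]

variable [MeasurableSpace Ω] [MeasurableSpace 𝕎] [MeasurableSingletonClass 𝕎] {P : Measure Ω}

lemma integrable_looContrast_term (hWm : ∀ i, Measurable (W i))
    (hYsint : ∀ w i, Integrable (Ys w i) P) (a b : 𝕎) (i j : Fin n) :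
    Integrable (fun ω =>
      (if W j ω = b then (1 : ℝ) else 0) * ((if W i ω = a then (1 : ℝ) else 0) * Ys a i ω)
        - (if W j ω = a then (1 : ℝ) else 0) * ((if W i ω = b then (1 : ℝ) else 0) * Ys b i ω))
      P :=
  (((hYsint a i).ite_mul (hWm i) a).ite_mul (hWm j) b).sub
    (((hYsint b i).ite_mul (hWm i) b).ite_mul (hWm j) a)

lemma integrable_looContrast (hWm : ∀ i, Measurable (W i))
    (hYsint : ∀ w i, Integrable (Ys w i) P) (a b : 𝕎) (i : Fin n) :
    Integrable (looContrast Xs W Ys a b i) P :=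
  integrable_finsetSum _ fun j _ => integrable_looContrast_term hWm hYsint a b i j

lemma integral_ite_mul_ite_mul_of_ne (hWm : ∀ i, Measurable (W i))
    (hYsint : ∀ w i, Integrable (Ys w i) P)
    (hindep : iIndepFun (fun i => (fun ω => (W i ω, fun w => Ys w i ω))) P)
    (hWY : ∀ i, IndepFun (W i) (fun ω => (fun w => Ys w i ω)) P)
    {lam : 𝕎 → Fin K → ℝ} (hlam : ∀ w k, 0 ≤ lam w k)
    (hlaw : ∀ i w, P {ω | W i ω = w} = ENNReal.ofReal (lam w (Xs i)))
    {muw : 𝕎 → ℝ} (hmu : ∀ w i, ∫ ω, Ys w i ω ∂P = muw w) {i j : Fin n} (hji : j ≠ i)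
    (c d : 𝕎) :
    ∫ ω, (if W j ω = c then (1 : ℝ) else 0) * ((if W i ω = d then (1 : ℝ) else 0) * Ys d i ω) ∂P
      = lam c (Xs j) * (lam d (Xs i) * muw d) := by
  have hg : Measurable fun p : 𝕎 × (𝕎 → ℝ) => (if p.1 = d then (1 : ℝ) else 0) * p.2 d :=
    ((measurable_ite_eq_one_zero d).comp measurable_fst).mul
      ((measurable_pi_apply d).comp measurable_snd)
  have hindep_ji : IndepFun (W j)
      (fun ω => (if W i ω = d then (1 : ℝ) else 0) * Ys d i ω) P :=
    (hindep.indepFun hji).comp measurable_fst hg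
  rw [hindep_ji.integral_ite_mul (hWm j) c
      ((hYsint d i).ite_mul (hWm i) d).aestronglyMeasurable,
    integral_ite_eq_of_measure_eq (hWm j) (hlam c (Xs j)) (hlaw j c),
    integral_ite_mul_apply_of_indepFun (hWm i) (hWY i) (hYsint d i) (hlam d (Xs i)) (hlaw i d),
    hmu]

lemma integral_looContrast_div (hWm : ∀ i, Measurable (W i))
    (hYsint : ∀ w i, Integrable (Ys w i) P)
    (hindep : iIndepFun (fun i => (fun ω => (W i ω, fun w => Ys w i ω))) P)
    (hWY : ∀ i, IndepFun (W i) (fun ω => (fun w => Ys w i ω)) P)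
    {lam : 𝕎 → Fin K → ℝ} (hlam : ∀ w k, 0 ≤ lam w k)
    (hlaw : ∀ i w, P {ω | W i ω = w} = ENNReal.ofReal (lam w (Xs i)))
    {muw : 𝕎 → ℝ} (hmu : ∀ w i, ∫ ω, Ys w i ω ∂P = muw w) (hNk : ∀ k, 2 ≤ Nstr Xs k)
    (a b : 𝕎) (i : Fin n) :
    ∫ ω, looContrast Xs W Ys a b i ω / ((Nstr Xs (Xs i) : ℝ) - 1) ∂P
      = lam a (Xs i) * lam b (Xs i) * (muw a - muw b) := by
  have hsum : ∫ ω, looContrast Xs W Ys a b i ω ∂P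
      = ∑ _j ∈ (stratum Xs (Xs i)).erase i, lam a (Xs i) * lam b (Xs i) * (muw a - muw b) := by
    unfold looContrast
    rw [integral_finsetSum _ fun j _ => integrable_looContrast_term hWm hYsint a b i j]
    refine sum_congr rfl fun j hj => ?_
    have hXj : Xs j = Xs i := (mem_filter.1 (mem_of_mem_erase hj)).2
    have hpair := integral_ite_mul_ite_mul_of_ne hWm hYsint hindep hWY hlam hlaw hmu
      (ne_of_mem_erase hj)
    rw [integral_sub (((hYsint a i).ite_mul (hWm i) a).ite_mul (hWm j) b)
        (((hYsint b i).ite_mul (hWm i) b).ite_mul (hWm j) a),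
      hpair, hpair, hXj]
    ring
  have hN : (Nstr Xs (Xs i) : ℝ) - 1 ≠ 0 := by
    have : (2 : ℝ) ≤ Nstr Xs (Xs i) := by exact_mod_cast hNk (Xs i)
    linarith
  rw [integral_div, hsum, sum_const, nsmul_eq_mul, stratum_card_erase_self i,
    mul_div_cancel_left₀ _ hN]

lemma integrable_Tstat (hWm : ∀ i, Measurable (W i)) (hYsint : ∀ w i, Integrable (Ys w i) P)
    {Y : Fin n → Ω → ℝ} (hY : ∀ i ω, Y i ω = Ys (W i ω) i ω) (a b : 𝕎) :
    Integrable (Tstat Xs W Y a b) P := by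
  rw [funext (Tstat_eq_sum_looContrast hY a b)]
  exact (integrable_finsetSum _ fun i _ =>
    (integrable_looContrast hWm hYsint a b i).div_const _).const_mul _

lemma integral_Tstat (hWm : ∀ i, Measurable (W i))
    (hYsint : ∀ w i, Integrable (Ys w i) P)
    (hindep : iIndepFun (fun i => (fun ω => (W i ω, fun w => Ys w i ω))) P)
    (hWY : ∀ i, IndepFun (W i) (fun ω => (fun w => Ys w i ω)) P)
    {lam : 𝕎 → Fin K → ℝ} (hlam : ∀ w k, 0 ≤ lam w k)
    (hlaw : ∀ i w, P {ω | W i ω = w} = ENNReal.ofReal (lam w (Xs i)))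
    {muw : 𝕎 → ℝ} (hmu : ∀ w i, ∫ ω, Ys w i ω ∂P = muw w) (hNk : ∀ k, 2 ≤ Nstr Xs k)
    {Y : Fin n → Ω → ℝ} (hY : ∀ i ω, Y i ω = Ys (W i ω) i ω) (a b : 𝕎) :
    ∫ ω, Tstat Xs W Y a b ω ∂P
      = ((1 / (n : ℝ)) * ∑ i : Fin n, lam a (Xs i) * lam b (Xs i)) * (muw a - muw b) := by
  simp_rw [Tstat_eq_sum_looContrast hY a b]
  rw [integral_const_mul, integral_finsetSum _ fun i _ =>
      (integrable_looContrast hWm hYsint a b i).div_const _, mul_assoc, sum_mul]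
  simp_rw [integral_looContrast_div hWm hYsint hindep hWY hlam hlaw hmu hNk]

end StratifiedModel

theorem stmt_18_general
    {Ω 𝕎 : Type*} [MeasurableSpace Ω] [DecidableEq 𝕎]
    [MeasurableSpace 𝕎] [MeasurableSingletonClass 𝕎]
    (P : Measure Ω) [IsProbabilityMeasure P]
    (n K : ℕ) (Xs : Fin n → Fin K)
    (hNk : ∀ k : Fin K, 2 ≤ Nstr Xs k)
    (W : Fin n → Ω → 𝕎) (hWm : ∀ i, Measurable (W i))
    (Ys : 𝕎 → Fin n → Ω → ℝ)
    (hYsint : ∀ w' i, Integrable (Ys w' i) P)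
    (hindep : iIndepFun
      (fun i => (fun ω => (W i ω, fun w' => Ys w' i ω))) P)
    (hWY : ∀ i, IndepFun (W i) (fun ω => (fun w' => Ys w' i ω)) P)
    (lam : 𝕎 → Fin K → ℝ) (hlam : ∀ w' k, lam w' k ∈ Set.Ioo (0:ℝ) 1)
    (hlaw : ∀ i w', P {ω | W i ω = w'} = ENNReal.ofReal (lam w' (Xs i)))
    (muw : 𝕎 → ℝ) (hmu : ∀ w' i, ∫ ω, Ys w' i ω ∂P = muw w')
    (Y : Fin n → Ω → ℝ) (hY : ∀ i ω, Y i ω = Ys (W i ω) i ω)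
    (a b : 𝕎) :
    (∫ ω, Tstat Xs W Y a b ω ∂P)
      = ((1 / (n : ℝ)) * ∑ i : Fin n, lam a (Xs i) * lam b (Xs i)) * (muw a - muw b) ∧
    (∫ ω, (((1 / (n : ℝ)) * ∑ i : Fin n, lam a (Xs i) * lam b (Xs i)) * (muw a - muw b)
        - Tstat Xs W Y a b ω) ∂P) = 0 := by
  have hmean := integral_Tstat hWm hYsint hindep hWY (fun w k => (hlam w k).1.le) hlaw hmu hNk
    hY a b
  refine ⟨hmean, ?_⟩
  rw [integral_sub (integrable_const _) (integrable_Tstat hWm hYsint hY a b), integral_const,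
    hmean, probReal_univ, one_smul, sub_self]

theorem stmt_18
    {Ω 𝕎 : Type*} [MeasurableSpace Ω] [Fintype 𝕎] [DecidableEq 𝕎]
    [MeasurableSpace 𝕎] [MeasurableSingletonClass 𝕎]
    (P : Measure Ω) [IsProbabilityMeasure P]
    (n K : ℕ) (hK : 1 < K) (Xs : Fin n → Fin K)
    (hNk : ∀ k : Fin K, 2 ≤ Nstr Xs k)
    (W : Fin n → Ω → 𝕎) (hWm : ∀ i, Measurable (W i))
    (Ys : 𝕎 → Fin n → Ω → ℝ) (hYsm : ∀ w' i, Measurable (Ys w' i))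
    (hYsint : ∀ w' i, Integrable (Ys w' i) P)
    (hindep : iIndepFun
      (fun i => (fun ω => (W i ω, fun w' => Ys w' i ω))) P)
    (hWY : ∀ i, IndepFun (W i) (fun ω => (fun w' => Ys w' i ω)) P)
    (lam : 𝕎 → Fin K → ℝ) (hlam : ∀ w' k, lam w' k ∈ Set.Ioo (0:ℝ) 1)
    (hlaw : ∀ i w', P {ω | W i ω = w'} = ENNReal.ofReal (lam w' (Xs i)))
    (muw : 𝕎 → ℝ) (hmu : ∀ w' i, ∫ ω, Ys w' i ω ∂P = muw w')
    (Y : Fin n → Ω → ℝ) (hY : ∀ i ω, Y i ω = Ys (W i ω) i ω)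
    (a b : 𝕎) (hab : a ≠ b) :
    (∫ ω, Tstat Xs W Y a b ω ∂P)
      = ((1 / (n : ℝ)) * ∑ i : Fin n, lam a (Xs i) * lam b (Xs i)) * (muw a - muw b) ∧
    (∫ ω, (((1 / (n : ℝ)) * ∑ i : Fin n, lam a (Xs i) * lam b (Xs i)) * (muw a - muw b)
        - Tstat Xs W Y a b ω) ∂P) = 0 :=
  stmt_18_general P n K Xs hNk W hWm Ys hYsint hindep hWY lam hlam hlaw muw hmu Y hY a b
end

section
/- In the design-based binary-treatment setting with fixed data, suppose the weak null hypothesis holds with hypothesized effect T̄ ∈ ℝ and bounded heterogeneity: Y*_{1,i} = Y*_{0,i} + T̄ + ε_i with |ε_i| ≤ c₁ for every unit i. Let W̃ = (W̃_1,…,W̃_n) be a random re-draw of {0,1}-valued treatments, Ỹ_i = Y_i + (T̄ + ε_i)(W̃_i − W_i) the corresponding observed outcomes, and T̃ = (1/n)·Σ_{i=1}^n Q_i(W̃)·Ỹ_i a linear test statistic with weights Q_i depending on (X_j, W̃_j)_{j=1}^n. Define Ω₁ = (1/n)·Σ_i Q_i(W̃)·Y_i, U_i = (1/n)·Q_i(W̃)·(W̃_i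 − W_i), Ω₂ = Σ_i U_i, Ω₃ = Σ_i 1{U_i ≥ 0}·U_i, and Ω₄ = Σ_i 1{U_i < 0}·U_i. Then, pointwise, T̃ = Ω₁ + Ω₂·T̄ + Σ_i ε_i·U_i, and Ω₁ + Ω₂·T̄ − c₁·Ω₃ + c₁·Ω₄ ≤ T̃ ≤ Ω₁ + Ω₂·T̄ + c₁·Ω₃ − c₁·Ω₄; consequently, for any threshold T̂ ∈ ℝ, the p-value P{T̃ ≥ T̂} satisfies P{Ω₁ + Ω₂·T̄ − c₁·Ω₃ + c₁·Ω₄ ≥ T̂} ≤ P{T̃ ≥ T̂} ≤ P{Ω₁ + Ω₂·T̄ + c₁·Ω₃ − c₁·Ω₄ ≥ T̂}, i.e., it is bounded by the extrema of {P{Ω₁ + Ω₂·T̄ + ε₃·Ω₃ + ε₄·Ω₄ ≥ T̂} : (ε₃, ε₄) ∈ {−c₁, c₁}²}. -/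
/-! The residual `T̃ - (Ω₁ + Ω₂ T̄) = ∑ εᵢ Uᵢ` is at most `c₁ ∑ |Uᵢ| = c₁ (Ω₃ - Ω₄)` in absolute
value; the bounds on the p-value then follow from monotonicity of the measure. -/

open MeasureTheory

/-- Real value of a Boolean treatment indicator. -/
def bval (x : Bool) : ℝ := if x then 1 else 0

/-- Observed outcome under a re-drawn treatment vector `v`. -/
noncomputable def Ytil {n : ℕ} (Y : Fin n → ℝ) (Tbar : ℝ) (ε : Fin n → ℝ)
    (W : Fin n → Bool) (v : Fin n → Bool) (i : Fin n) : ℝ :=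
  Y i + (Tbar + ε i) * (bval (v i) - bval (W i))

/-- The linear test statistic `T̃` evaluated at the re-drawn treatment vector `v`. -/
noncomputable def Ttil {n : ℕ} (Q : Fin n → (Fin n → Bool) → ℝ) (Y : Fin n → ℝ) (Tbar : ℝ)
    (ε : Fin n → ℝ) (W : Fin n → Bool) (v : Fin n → Bool) : ℝ :=
  (1 / (n : ℝ)) * ∑ i : Fin n, Q i v * Ytil Y Tbar ε W v i

/-- `Ω₁`. -/
noncomputable def Omega1 {n : ℕ} (Q : Fin n → (Fin n → Bool) → ℝ) (Y : Fin n → ℝ)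
    (v : Fin n → Bool) : ℝ :=
  (1 / (n : ℝ)) * ∑ i : Fin n, Q i v * Y i

/-- `U_i`. -/
noncomputable def Uval {n : ℕ} (Q : Fin n → (Fin n → Bool) → ℝ) (W : Fin n → Bool)
    (v : Fin n → Bool) (i : Fin n) : ℝ :=
  (1 / (n : ℝ)) * Q i v * (bval (v i) - bval (W i))

/-- `Ω₂`. -/
noncomputable def Omega2 {n : ℕ} (Q : Fin n → (Fin n → Bool) → ℝ) (W : Fin n → Bool)
    (v : Fin n → Bool) : ℝ :=
  ∑ i : Fin n, Uval Q W v i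

/-- `Ω₃`. -/
noncomputable def Omega3 {n : ℕ} (Q : Fin n → (Fin n → Bool) → ℝ) (W : Fin n → Bool)
    (v : Fin n → Bool) : ℝ :=
  ∑ i : Fin n, if 0 ≤ Uval Q W v i then Uval Q W v i else 0

/-- `Ω₄`. -/
noncomputable def Omega4 {n : ℕ} (Q : Fin n → (Fin n → Bool) → ℝ) (W : Fin n → Bool)
    (v : Fin n → Bool) : ℝ :=
  ∑ i : Fin n, if Uval Q W v i < 0 then Uval Q W v i else 0

theorem abs_sum_mul_le_mul_sum_abs {ι : Type*} (s : Finset ι) (e u : ι → ℝ) {c : ℝ}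
    (he : ∀ i ∈ s, |e i| ≤ c) : |∑ i ∈ s, e i * u i| ≤ c * ∑ i ∈ s, |u i| := by
  rw [Finset.mul_sum]
  refine (Finset.abs_sum_le_sum_abs _ _).trans (Finset.sum_le_sum fun i hi => ?_)
  rw [abs_mul]
  exact mul_le_mul_of_nonneg_right (he i hi) (abs_nonneg _)

theorem Ttil_eq {n : ℕ} (Q : Fin n → (Fin n → Bool) → ℝ) (Y : Fin n → ℝ) (Tbar : ℝ)
    (ε : Fin n → ℝ) (W v : Fin n → Bool) :
    Ttil Q Y Tbar ε W v
      = Omega1 Q Y v + Omega2 Q W v * Tbar + ∑ i : Fin n, ε i * Uval Q W v i := by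
  simp only [Ttil, Ytil, Omega1, Omega2, Uval, Finset.mul_sum, Finset.sum_mul,
    ← Finset.sum_add_distrib]
  exact Finset.sum_congr rfl fun i _ => by ring

theorem Omega3_sub_Omega4 {n : ℕ} (Q : Fin n → (Fin n → Bool) → ℝ) (W v : Fin n → Bool) :
    Omega3 Q W v - Omega4 Q W v = ∑ i : Fin n, |Uval Q W v i| := by
  rw [Omega3, Omega4, ← Finset.sum_sub_distrib]
  refine Finset.sum_congr rfl fun i _ => ?_
  rcases le_or_gt 0 (Uval Q W v i) with h | h
  · rw [if_pos h, if_neg h.not_gt, abs_of_nonneg h, sub_zero]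
  · rw [if_neg h.not_ge, if_pos h, abs_of_neg h, zero_sub]

theorem abs_Ttil_sub_le {n : ℕ} (Q : Fin n → (Fin n → Bool) → ℝ) (Y : Fin n → ℝ)
    {Tbar c1 : ℝ} {ε : Fin n → ℝ} (hε : ∀ i, |ε i| ≤ c1) (W v : Fin n → Bool) :
    |Ttil Q Y Tbar ε W v - (Omega1 Q Y v + Omega2 Q W v * Tbar)|
      ≤ c1 * (Omega3 Q W v - Omega4 Q W v) := by
  rw [Ttil_eq, add_sub_cancel_left, Omega3_sub_Omega4]
  exact abs_sum_mul_le_mul_sum_abs _ _ _ fun i _ => hε i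

theorem stmt_19_general {Ω : Type*} [MeasurableSpace Ω] (P : Measure Ω)
    (n : ℕ) (W : Fin n → Bool) (Y : Fin n → ℝ)
    (Tbar c1 : ℝ) (ε : Fin n → ℝ) (hε : ∀ i, |ε i| ≤ c1)
    (Wt : Ω → Fin n → Bool) (Q : Fin n → (Fin n → Bool) → ℝ) :
    (∀ v : Fin n → Bool,
      Ttil Q Y Tbar ε W v
        = Omega1 Q Y v + Omega2 Q W v * Tbar + ∑ i : Fin n, ε i * Uval Q W v i) ∧
    (∀ v : Fin n → Bool,
      Omega1 Q Y v + Omega2 Q W v * Tbar - c1 * Omega3 Q W v + c1 * Omega4 Q W v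
          ≤ Ttil Q Y Tbar ε W v ∧
      Ttil Q Y Tbar ε W v
          ≤ Omega1 Q Y v + Omega2 Q W v * Tbar + c1 * Omega3 Q W v - c1 * Omega4 Q W v) ∧
    (∀ That : ℝ,
      P {ω | That ≤ Omega1 Q Y (Wt ω) + Omega2 Q W (Wt ω) * Tbar
              - c1 * Omega3 Q W (Wt ω) + c1 * Omega4 Q W (Wt ω)}
          ≤ P {ω | That ≤ Ttil Q Y Tbar ε W (Wt ω)} ∧
      P {ω | That ≤ Ttil Q Y Tbar ε W (Wt ω)}
          ≤ P {ω | That ≤ Omega1 Q Y (Wt ω) + Omega2 Q W (Wt ω) * Tbar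
              + c1 * Omega3 Q W (Wt ω) - c1 * Omega4 Q W (Wt ω)}) := by
  have hbound : ∀ v : Fin n → Bool,
      Omega1 Q Y v + Omega2 Q W v * Tbar - c1 * Omega3 Q W v + c1 * Omega4 Q W v
          ≤ Ttil Q Y Tbar ε W v ∧
      Ttil Q Y Tbar ε W v
          ≤ Omega1 Q Y v + Omega2 Q W v * Tbar + c1 * Omega3 Q W v - c1 * Omega4 Q W v := by
    intro v
    obtain ⟨hlow, hup⟩ := abs_le.mp (abs_Ttil_sub_le Q Y (Tbar := Tbar) hε W v)
    constructor <;> linarith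
  refine ⟨Ttil_eq Q Y Tbar ε W, hbound, fun That => ⟨?_, ?_⟩⟩
  · exact measure_mono fun ω hω => le_trans hω (hbound (Wt ω)).1
  · exact measure_mono fun ω hω => le_trans hω (hbound (Wt ω)).2

theorem stmt_19 {Ω : Type*} [MeasurableSpace Ω] (P : Measure Ω) [IsProbabilityMeasure P]
    (n : ℕ) (hn : 0 < n)
    (Ys0 Ys1 : Fin n → ℝ) (W : Fin n → Bool)
    (Y : Fin n → ℝ) (hY : ∀ i, Y i = if W i then Ys1 i else Ys0 i)
    (Tbar c1 : ℝ) (hc1 : 0 ≤ c1) (ε : Fin n → ℝ)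
    (hnull : ∀ i, Ys1 i = Ys0 i + Tbar + ε i) (hε : ∀ i, |ε i| ≤ c1)
    (Wt : Ω → Fin n → Bool) (hWtm : Measurable Wt)
    (Q : Fin n → (Fin n → Bool) → ℝ) :
    (∀ v : Fin n → Bool,
      Ttil Q Y Tbar ε W v
        = Omega1 Q Y v + Omega2 Q W v * Tbar + ∑ i : Fin n, ε i * Uval Q W v i) ∧
    (∀ v : Fin n → Bool,
      Omega1 Q Y v + Omega2 Q W v * Tbar - c1 * Omega3 Q W v + c1 * Omega4 Q W v
          ≤ Ttil Q Y Tbar ε W v ∧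
      Ttil Q Y Tbar ε W v
          ≤ Omega1 Q Y v + Omega2 Q W v * Tbar + c1 * Omega3 Q W v - c1 * Omega4 Q W v) ∧
    (∀ That : ℝ,
      P {ω | That ≤ Omega1 Q Y (Wt ω) + Omega2 Q W (Wt ω) * Tbar
              - c1 * Omega3 Q W (Wt ω) + c1 * Omega4 Q W (Wt ω)}
          ≤ P {ω | That ≤ Ttil Q Y Tbar ε W (Wt ω)} ∧
      P {ω | That ≤ Ttil Q Y Tbar ε W (Wt ω)}
          ≤ P {ω | That ≤ Omega1 Q Y (Wt ω) + Omega2 Q W (Wt ω) * Tbar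
              + c1 * Omega3 Q W (Wt ω) - c1 * Omega4 Q W (Wt ω)}) :=
  stmt_19_general P n W Y Tbar c1 ε hε Wt Q
end
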